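/- arXiv:1511.07279 — 7 statements merged into one kernel-verified Lean document; each statement's English description precedes it below -/
import Mathlib

section
/- For every t > 0, every z₁ > 0 and every z₂ ≥ 0, ∫₀ᵗ (z₁/s)·G(s,z₁)·G(t−s, z₂) ds = G(t, z₁ + z₂). -/
open MeasureTheory Real

/-- The one-dimensional heat kernel `G(t,z) = (4πt)^{-1/2} exp(-z²/(4t))`. -/
noncomputable def heatKernel (t z : ℝ) : ℝ :=
  (4 * Real.pi * t) ^ (-(1:ℝ)/2) * Real.exp (-z ^ 2 / (4 * t))

/-!
The integrand has an explicit primitive. Let `Φ x = ∫₀ˣ exp (-y²)` (`gaussianPrimitive`) and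
`w_y(s) = (z₁ √(t-s) / √s + y √s / √(t-s)) / (2√t)` (`heatArg t z₁ y s`). Completing the square,
`(z₁ - y)²/(4t) + w_y(s)² = z₁²/(4s) + y²/(4(t-s))`, so the derivative of
`exp (-(z₁ - y)²/(4t)) Φ(w_y(s))` is `exp (-z₁²/(4s) - y²/(4(t-s))) w_y'(s)`. In the sum over
`y = ±z₂` the `z₂`-parts of `w_y'` cancel, and what is left is a multiple of the integrand.
As `s → 0⁺` both `w_{±z₂} → ∞`. As `s → t⁻`, `w_{z₂} → ∞` and `w_{-z₂} → -∞` (both tend to `0`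
if `z₂ = 0`), so only the `exp (-(z₁ + z₂)²/(4t))` term survives in the difference of the limits.
Integrability is free: a nonnegative derivative of a function with finite one-sided limits at
both ends is integrable.
-/

open Filter Set Topology

theorem intervalIntegral.intervalIntegrable_deriv_of_nonneg_of_tendsto {f f' : ℝ → ℝ}
    {a b fa fb : ℝ} (hab : a < b)
    (hderiv : ∀ x ∈ Ioo a b, HasDerivAt f (f' x) x) (hpos : ∀ x ∈ Ioo a b, 0 ≤ f' x)
    (ha : Tendsto f (𝓝[>] a) (𝓝 fa)) (hb : Tendsto f (𝓝[<] b) (𝓝 fb)) :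
    IntervalIntegrable f' volume a b := by
  set F : ℝ → ℝ := Function.update (Function.update f a fa) b fb
  have hFf : EqOn F f (Ioo a b) := fun x hx => by
    simp only [F, Function.update_of_ne hx.2.ne, Function.update_of_ne hx.1.ne']
  have hcont : ContinuousOn F (Icc a b) := by
    rw [continuousOn_update_iff, continuousOn_update_iff, Icc_sdiff_right, Ico_sdiff_left]
    refine ⟨⟨fun z hz => (hderiv z hz).continuousAt.continuousWithinAt, ?_⟩, ?_⟩
    · exact fun _ => ha.mono_left (nhdsWithin_mono _ Ioo_subset_Ioi_self)
    · rintro -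
      refine (hb.congr' ?_).mono_left (nhdsWithin_mono _ Ico_subset_Iio_self)
      filter_upwards [Ioo_mem_nhdsLT hab] with _ hz using
        (Function.update_of_ne hz.1.ne' _ _).symm
  refine intervalIntegral.intervalIntegrable_deriv_of_nonneg (g := F) ?_ ?_ ?_
  · simpa [hab.le] using hcont
  · intro x hx
    rw [min_eq_left hab.le, max_eq_right hab.le] at hx
    exact (hderiv x hx).congr_of_eventuallyEq (eventuallyEq_of_mem (Ioo_mem_nhds hx.1 hx.2) hFf)
  · simpa [hab.le] using hpos

theorem intervalIntegral.integral_eq_sub_of_hasDerivAt_of_tendsto_of_nonneg {f f' : ℝ → ℝ}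
    {a b fa fb : ℝ} (hab : a < b)
    (hderiv : ∀ x ∈ Ioo a b, HasDerivAt f (f' x) x) (hpos : ∀ x ∈ Ioo a b, 0 ≤ f' x)
    (ha : Tendsto f (𝓝[>] a) (𝓝 fa)) (hb : Tendsto f (𝓝[<] b) (𝓝 fb)) :
    ∫ x in a..b, f' x = fb - fa :=
  integral_eq_sub_of_hasDerivAt_of_tendsto hab hderiv
    (intervalIntegrable_deriv_of_nonneg_of_tendsto hab hderiv hpos ha hb) ha hb

noncomputable def gaussianPrimitive (x : ℝ) : ℝ := ∫ y in (0:ℝ)..x, exp (-y ^ 2)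

theorem hasDerivAt_gaussianPrimitive (x : ℝ) :
    HasDerivAt gaussianPrimitive (exp (-x ^ 2)) x := by
  have hc : Continuous fun y : ℝ => exp (-y ^ 2) := by fun_prop
  exact intervalIntegral.integral_hasDerivAt_right (hc.intervalIntegrable _ _)
    hc.stronglyMeasurable.stronglyMeasurableAtFilter hc.continuousAt

theorem gaussianPrimitive_zero : gaussianPrimitive 0 = 0 := by simp [gaussianPrimitive]

theorem gaussianPrimitive_neg (x : ℝ) : gaussianPrimitive (-x) = -gaussianPrimitive x := by
  have h := intervalIntegral.integral_comp_neg (a := (0:ℝ)) (b := -x) fun y => exp (-y ^ 2)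
  simp only [even_two, Even.neg_pow, neg_zero, neg_neg] at h
  rw [gaussianPrimitive, gaussianPrimitive, h, intervalIntegral.integral_symm]

theorem tendsto_gaussianPrimitive_atTop :
    Tendsto gaussianPrimitive atTop (𝓝 (√π / 2)) := by
  have hint : IntegrableOn (fun y : ℝ => exp (-y ^ 2)) (Ioi 0) := by
    simpa using integrableOn_Ioi_exp_neg_mul_sq_iff.mpr one_pos
  have h := intervalIntegral_tendsto_integral_Ioi 0 hint tendsto_id
  have hval : ∫ y in Ioi (0:ℝ), exp (-y ^ 2) = √π / 2 := by simpa using integral_gaussian_Ioi 1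
  rwa [hval] at h

theorem tendsto_gaussianPrimitive_atBot :
    Tendsto gaussianPrimitive atBot (𝓝 (-(√π / 2))) := by
  have h := (tendsto_gaussianPrimitive_atTop.comp tendsto_neg_atBot_atTop).neg
  refine h.congr fun x => ?_
  simp [gaussianPrimitive_neg]

theorem heatKernel_nonneg {t : ℝ} (ht : 0 ≤ t) (z : ℝ) : 0 ≤ heatKernel t z := by
  unfold heatKernel; positivity

theorem heatKernel_eq {t : ℝ} (ht : 0 < t) (z : ℝ) :
    heatKernel t z = exp (-z ^ 2 / (4 * t)) / (2 * √π * √t) := by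
  have hsq : 4 * π * t = (2 * √π * √t) ^ 2 := by
    rw [mul_pow, mul_pow, sq_sqrt pi_pos.le, sq_sqrt ht.le]; ring
  rw [heatKernel, hsq, ← rpow_natCast, ← rpow_mul (by positivity)]
  norm_num [rpow_neg_one, div_eq_inv_mul]

noncomputable def heatArg (t x y s : ℝ) : ℝ :=
  (x * √(t - s) / √s + y * √s / √(t - s)) / (2 * √t)

theorem heatArg_const_sub (t x y s : ℝ) : heatArg t x y (t - s) = heatArg t y x s := by
  simp only [heatArg, sub_sub_cancel]; ring

theorem heatArg_neg (t x y s : ℝ) : heatArg t (-x) (-y) s = -heatArg t x y s := by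
  simp only [heatArg]; ring

theorem sq_add_sq_heatArg {t s : ℝ} (hs : 0 < s) (hst : s < t) (x y : ℝ) :
    (x - y) ^ 2 / (4 * t) + heatArg t x y s ^ 2 = x ^ 2 / (4 * s) + y ^ 2 / (4 * (t - s)) := by
  have hA : 0 < √s := sqrt_pos.mpr hs
  have hB : 0 < √(t - s) := sqrt_pos.mpr (sub_pos.mpr hst)
  have hA2 := sq_sqrt hs.le
  have hB2 := sq_sqrt (sub_pos.mpr hst).le
  have hT2 := sq_sqrt (hs.trans hst).le
  have ht : t ≠ 0 := (hs.trans hst).ne'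
  have hts : t - s ≠ 0 := (sub_pos.mpr hst).ne'
  rw [heatArg]
  field_simp
  rw [hA2, hB2, hT2]
  field_simp
  ring

theorem hasDerivAt_heatArg {t s : ℝ} (hs : 0 < s) (hst : s < t) (x y : ℝ) :
    HasDerivAt (heatArg t x y) (t * (y / (t - s) - x / s) / (4 * √t * √s * √(t - s))) s := by
  have hA : 0 < √s := sqrt_pos.mpr hs
  have hB : 0 < √(t - s) := sqrt_pos.mpr (sub_pos.mpr hst)
  have hA2 := sq_sqrt hs.le
  have hB2 := sq_sqrt (sub_pos.mpr hst).le
  have hdA : HasDerivAt (fun s => √s) (1 / (2 * √s)) s := hasDerivAt_sqrt hs.ne'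
  have hdB : HasDerivAt (fun s => √(t - s)) (-1 / (2 * √(t - s))) s :=
    ((hasDerivAt_sqrt (sub_pos.mpr hst).ne').comp s
      ((hasDerivAt_id s).const_sub t)).congr_deriv (by ring)
  have h := (((hdB.const_mul x).div hdA hA.ne').add ((hdA.const_mul y).div hdB hB.ne')).div_const
    (2 * √t)
  have ht : t ≠ 0 := (hs.trans hst).ne'
  have hts : t - s ≠ 0 := (sub_pos.mpr hst).ne'
  refine HasDerivAt.congr_deriv (f := heatArg t x y) h ?_
  field_simp
  rw [hA2, hB2]
  ring

theorem tendsto_heatArg_nhdsGT_zero {t x : ℝ} (ht : 0 < t) (hx : 0 < x) (y : ℝ) :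
    Tendsto (heatArg t x y) (𝓝[>] 0) atTop := by
  have hcont : ContinuousAt (fun s => √(t - s)) 0 := by fun_prop
  have hsqrt : Tendsto (fun s => √(t - s)) (𝓝[>] 0) (𝓝 √t) := by
    simpa using hcont.tendsto.mono_left nhdsWithin_le_nhds
  have hinv : Tendsto (fun s => (√s)⁻¹) (𝓝[>] 0) atTop :=
    (tendsto_sqrt_atTop.comp tendsto_inv_nhdsGT_zero).congr sqrt_inv
  have hfirst : Tendsto (fun s => x * √(t - s) * (√s)⁻¹) (𝓝[>] 0) atTop :=
    (hsqrt.const_mul x).pos_mul_atTop (by positivity) hinv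
  have hsecond : Tendsto (fun s => y * √s / √(t - s)) (𝓝[>] 0) (𝓝 0) := by
    have h : ContinuousAt (fun s => y * √s / √(t - s)) 0 := by
      fun_prop (disch := simp [(sqrt_pos.2 ht).ne'])
    simpa using h.tendsto.mono_left nhdsWithin_le_nhds
  exact (hfirst.atTop_add hsecond).atTop_div_const (by positivity)

theorem tendsto_heatArg_zero_nhdsGT_zero {t : ℝ} (ht : 0 < t) (y : ℝ) :
    Tendsto (heatArg t 0 y) (𝓝[>] 0) (𝓝 0) := by
  have h : ContinuousAt (fun s => y * √s / √(t - s) / (2 * √t)) 0 := by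
    fun_prop (disch := simp [(sqrt_pos.2 ht).ne'])
  have heq : heatArg t 0 y = fun s => y * √s / √(t - s) / (2 * √t) := by
    funext s; simp [heatArg]
  simpa [heq] using h.tendsto.mono_left nhdsWithin_le_nhds

theorem tendsto_const_sub_nhdsLT (t : ℝ) : Tendsto (t - ·) (𝓝[<] t) (𝓝[>] 0) := by
  refine tendsto_nhdsWithin_of_tendsto_nhds_of_eventually_within _ ?_ ?_
  · simpa using ((continuous_sub_left t).tendsto t).mono_left nhdsWithin_le_nhds
  · filter_upwards [self_mem_nhdsWithin] with s hs using sub_pos.mpr hs.out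

theorem tendsto_heatArg_nhdsLT {t x y : ℝ} (ht : 0 < t) (hy : 0 < y) :
    Tendsto (heatArg t x y) (𝓝[<] t) atTop := by
  simpa [Function.comp_def, heatArg_const_sub] using
    (tendsto_heatArg_nhdsGT_zero ht hy x).comp (tendsto_const_sub_nhdsLT t)

theorem exp_mul_exp_neg_heatArg_sq {t s : ℝ} (hs : 0 < s) (hst : s < t) (x y : ℝ) :
    exp (-(x - y) ^ 2 / (4 * t)) * exp (-heatArg t x y s ^ 2)
      = exp (-x ^ 2 / (4 * s)) * exp (-y ^ 2 / (4 * (t - s))) := by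
  rw [← exp_add, ← exp_add]
  congr 1
  linear_combination -sq_add_sq_heatArg hs hst x y

noncomputable def heatPrimitive (t z₁ z₂ s : ℝ) : ℝ :=
  -(exp (-(z₁ + z₂) ^ 2 / (4 * t)) * gaussianPrimitive (heatArg t z₁ (-z₂) s)
    + exp (-(z₁ - z₂) ^ 2 / (4 * t)) * gaussianPrimitive (heatArg t z₁ z₂ s)) / (2 * π * √t)

theorem hasDerivAt_heatPrimitive {t s : ℝ} (hs : 0 < s) (hst : s < t) (z₁ z₂ : ℝ) :
    HasDerivAt (heatPrimitive t z₁ z₂) (z₁ / s * heatKernel s z₁ * heatKernel (t - s) z₂) s := by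
  have hu := (hasDerivAt_gaussianPrimitive _).comp s (hasDerivAt_heatArg hs hst z₁ (-z₂))
  have hv := (hasDerivAt_gaussianPrimitive _).comp s (hasDerivAt_heatArg hs hst z₁ z₂)
  have h := (((hu.const_mul (exp (-(z₁ + z₂) ^ 2 / (4 * t)))).add
    (hv.const_mul (exp (-(z₁ - z₂) ^ 2 / (4 * t))))).neg.div_const (2 * π * √t))
  refine HasDerivAt.congr_deriv (f := heatPrimitive t z₁ z₂) h ?_
  have hu_exp := exp_mul_exp_neg_heatArg_sq hs hst z₁ (-z₂)
  rw [sub_neg_eq_add] at hu_exp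
  rw [← mul_assoc, ← mul_assoc, hu_exp, exp_mul_exp_neg_heatArg_sq hs hst,
    heatKernel_eq hs, heatKernel_eq (sub_pos.mpr hst)]
  have hT : 0 < √t := sqrt_pos.mpr (hs.trans hst)
  have hT2 := sq_sqrt (hs.trans hst).le
  have hP2 := sq_sqrt pi_pos.le
  have hts : t - s ≠ 0 := (sub_pos.mpr hst).ne'
  field_simp
  rw [hT2, hP2]
  ring

theorem tendsto_heatPrimitive_nhdsGT_zero {t z₁ : ℝ} (ht : 0 < t) (hz₁ : 0 < z₁) (z₂ : ℝ) :
    Tendsto (heatPrimitive t z₁ z₂) (𝓝[>] 0) (𝓝 (-(exp (-(z₁ + z₂) ^ 2 / (4 * t))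
      + exp (-(z₁ - z₂) ^ 2 / (4 * t))) * (√π / 2) / (2 * π * √t))) := by
  have hu := tendsto_gaussianPrimitive_atTop.comp (tendsto_heatArg_nhdsGT_zero ht hz₁ (-z₂))
  have hv := tendsto_gaussianPrimitive_atTop.comp (tendsto_heatArg_nhdsGT_zero ht hz₁ z₂)
  convert ((hu.const_mul (exp (-(z₁ + z₂) ^ 2 / (4 * t)))).add
    (hv.const_mul (exp (-(z₁ - z₂) ^ 2 / (4 * t))))).neg.div_const (2 * π * √t) using 2
  · rfl
  · ring

theorem tendsto_heatPrimitive_nhdsLT {t z₂ : ℝ} (ht : 0 < t) (z₁ : ℝ) (hz₂ : 0 ≤ z₂) :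
    Tendsto (heatPrimitive t z₁ z₂) (𝓝[<] t) (𝓝 ((exp (-(z₁ + z₂) ^ 2 / (4 * t))
      - exp (-(z₁ - z₂) ^ 2 / (4 * t))) * (√π / 2) / (2 * π * √t))) := by
  rcases hz₂.eq_or_lt with rfl | hz₂
  · have harg : Tendsto (heatArg t z₁ 0) (𝓝[<] t) (𝓝 0) := by
      simpa [Function.comp_def, heatArg_const_sub] using
        (tendsto_heatArg_zero_nhdsGT_zero ht z₁).comp (tendsto_const_sub_nhdsLT t)
    have hΦ := (hasDerivAt_gaussianPrimitive 0).continuousAt.tendsto.comp harg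
    rw [gaussianPrimitive_zero] at hΦ
    convert ((hΦ.const_mul (exp (-(z₁ + 0) ^ 2 / (4 * t)))).add
      (hΦ.const_mul (exp (-(z₁ - 0) ^ 2 / (4 * t))))).neg.div_const (2 * π * √t) using 2
    · simp [heatPrimitive]
    · simp
  · have harg : Tendsto (heatArg t z₁ (-z₂)) (𝓝[<] t) atBot := by
      simpa [Function.comp_def, ← heatArg_neg] using
        tendsto_neg_atTop_atBot.comp (tendsto_heatArg_nhdsLT ht hz₂ (x := -z₁))
    have hu := tendsto_gaussianPrimitive_atBot.comp harg
    have hv := tendsto_gaussianPrimitive_atTop.comp (tendsto_heatArg_nhdsLT ht hz₂ (x := z₁))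
    convert ((hu.const_mul (exp (-(z₁ + z₂) ^ 2 / (4 * t)))).add
      (hv.const_mul (exp (-(z₁ - z₂) ^ 2 / (4 * t))))).neg.div_const (2 * π * √t) using 2
    · rfl
    · ring

/-- For `t > 0`, `z₁ > 0`, `z₂ ≥ 0`:
`∫₀ᵗ (z₁/s)·G(s,z₁)·G(t−s,z₂) ds = G(t, z₁+z₂)`. -/
theorem stmt_1 (t z₁ z₂ : ℝ) (ht : 0 < t) (hz₁ : 0 < z₁) (hz₂ : 0 ≤ z₂) :
    ∫ s in (0:ℝ)..t, (z₁ / s) * heatKernel s z₁ * heatKernel (t - s) z₂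
      = heatKernel t (z₁ + z₂) := by
  have hnonneg : ∀ s ∈ Ioo 0 t, 0 ≤ z₁ / s * heatKernel s z₁ * heatKernel (t - s) z₂ :=
    fun s hs => mul_nonneg (mul_nonneg (div_nonneg hz₁.le hs.1.le) (heatKernel_nonneg hs.1.le z₁))
      (heatKernel_nonneg (sub_pos.mpr hs.2).le z₂)
  rw [intervalIntegral.integral_eq_sub_of_hasDerivAt_of_tendsto_of_nonneg ht
    (fun s hs => hasDerivAt_heatPrimitive hs.1 hs.2 z₁ z₂) hnonneg
    (tendsto_heatPrimitive_nhdsGT_zero ht hz₁ z₂) (tendsto_heatPrimitive_nhdsLT ht z₁ hz₂),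
    heatKernel_eq ht]
  field_simp
  rw [sq_sqrt pi_pos.le]
  ring
end

section
/- For every t > 0 and all z₁, z₂ > 0, ∫₀ᵗ (z₁/s)·G(s,z₁)·(z₂/(t−s))·G(t−s,z₂) ds = ((z₁+z₂)/t)·G(t, z₁+z₂). -/
/-!
Write `a = z₁`, `b = z₂`. The substitution `v = (a(t-s) - bs) / (√t √(s(t-s)))` maps `(0, t)`
decreasingly onto `ℝ` and completes the square in the exponent: `a²/s + b²/(t-s) = (a+b)²/t + v²`.
Since `√(t v² + 4ab) = (a(t-s) + bs) / √(s(t-s))` and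
`(a+b)(a(t-s) + bs) + (b-a)(a(t-s) - bs) = 2abt`, the integrand is `|dv/ds|` times a constant
multiple of `(a + b + (b-a) φ(√t v)) e^{-v²/4}` with `φ(x) = x / √(x² + 4ab)` odd and bounded.
The odd part integrates to zero, leaving `2√π (a+b)` times that constant.
-/

open MeasureTheory Real

open Set

lemma heatKernel_eq_exp_div {τ : ℝ} (hτ : 0 < τ) (z : ℝ) :
    heatKernel τ z = exp (-z ^ 2 / (4 * τ)) / (2 * √π * √τ) := by
  have h4 : √4 = 2 := by rw [show (4 : ℝ) = 2 ^ 2 by norm_num, sqrt_sq zero_le_two]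
  rw [heatKernel, neg_div, rpow_neg (by positivity), ← sqrt_eq_rpow, sqrt_mul (by positivity),
    sqrt_mul (by norm_num), h4, inv_mul_eq_div]

lemma integral_eq_zero_of_odd {E : Type*} [NormedAddCommGroup E] [NormedSpace ℝ E]
    {f : ℝ → E} (hf : ∀ v, f (-v) = -f v) : ∫ v, f v = 0 := by
  have h := integral_neg_eq_self f volume
  simp only [hf, integral_neg] at h
  have h2 : (2 : ℝ) • ∫ v, f v = 0 := by rw [two_smul]; nth_rewrite 1 [← h]; exact neg_add_cancel _
  exact (smul_eq_zero.mp h2).resolve_left two_ne_zero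

lemma exp_neg_sq_div_four_eq (v : ℝ) : exp (-v ^ 2 / 4) = exp (-(1 / 4) * v ^ 2) := by
  ring_nf

lemma integrable_exp_neg_sq_div_four : Integrable fun v : ℝ ↦ exp (-v ^ 2 / 4) := by
  simpa only [exp_neg_sq_div_four_eq] using integrable_exp_neg_mul_sq (by norm_num : (0:ℝ) < 1 / 4)

lemma integral_exp_neg_sq_div_four : ∫ v : ℝ, exp (-v ^ 2 / 4) = 2 * √π := by
  rw [integral_congr_ae (Filter.Eventually.of_forall exp_neg_sq_div_four_eq), integral_gaussian,
    div_div_eq_mul_div, div_one, mul_comm, sqrt_mul (by norm_num),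
    show (4 : ℝ) = 2 ^ 2 by norm_num, sqrt_sq zero_le_two]

lemma integral_add_odd_mul_exp_neg_sq_div_four {ψ : ℝ → ℝ} {C : ℝ}
    (hψ : AEStronglyMeasurable ψ) (hbdd : ∀ v, |ψ v| ≤ C) (hodd : ∀ v, ψ (-v) = -ψ v) (α : ℝ) :
    ∫ v, (α + ψ v) * exp (-v ^ 2 / 4) = 2 * √π * α := by
  have hint : Integrable fun v ↦ ψ v * exp (-v ^ 2 / 4) :=
    integrable_exp_neg_sq_div_four.bdd_mul hψ (Filter.Eventually.of_forall hbdd)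
  simp only [add_mul]
  rw [integral_add (integrable_exp_neg_sq_div_four.const_mul α) hint, integral_const_mul,
    integral_exp_neg_sq_div_four, integral_eq_zero_of_odd (fun v ↦ by simp [hodd])]
  ring

noncomputable def gaussSubst (t a b s : ℝ) : ℝ := (a * (t - s) - b * s) / (√t * √(s * (t - s)))

noncomputable def gaussSubstDeriv (t a b s : ℝ) : ℝ :=
  -(√t * (a * (t - s) + b * s)) / (2 * √(s * (t - s)) ^ 3)

lemma hasDerivAt_gaussSubst {t s : ℝ} (a b : ℝ) (hs : s ∈ Ioo 0 t) :
    HasDerivAt (gaussSubst t a b) (gaussSubstDeriv t a b s) s := by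
  obtain ⟨hs0, hst⟩ := hs
  have hD : 0 < s * (t - s) := mul_pos hs0 (sub_pos.2 hst)
  have ht : 0 < t := hs0.trans hst
  have hprod : HasDerivAt (fun x ↦ x * (t - x)) (t - 2 * s) s :=
    ((hasDerivAt_id' s).mul ((hasDerivAt_id' s).const_sub t)).congr_deriv (by ring)
  have hnum : HasDerivAt (fun x ↦ a * (t - x) - b * x) (-(a + b)) s :=
    ((((hasDerivAt_id' s).const_sub t).const_mul a).sub
      ((hasDerivAt_id' s).const_mul b)).congr_deriv (by ring)
  refine (hnum.div ((hprod.sqrt hD.ne').const_mul √t) (by positivity)).congr_deriv ?_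
  rw [gaussSubstDeriv]
  field_simp
  linear_combination (-2 * (a + b)) * sq_sqrt hD.le + (a * (t - s) + b * s) * sq_sqrt ht.le

lemma gaussSubstDeriv_neg {t a b s : ℝ} (ha : 0 < a) (hb : 0 < b) (hs : s ∈ Ioo 0 t) :
    gaussSubstDeriv t a b s < 0 := by
  obtain ⟨hs0, hst⟩ := hs
  have : 0 < √t := sqrt_pos.2 (hs0.trans hst)
  exact div_neg_of_neg_of_pos (neg_neg_of_pos (by positivity)) (by positivity)

lemma gaussSubst_mul_sq_div_one_add_sq {t σ : ℝ} (a b : ℝ) (ht : 0 < t) (hσ : 0 < σ) :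
    gaussSubst t a b (t * σ ^ 2 / (1 + σ ^ 2)) = (a / σ - b * σ) / √t := by
  have hsub : t - t * σ ^ 2 / (1 + σ ^ 2) = t / (1 + σ ^ 2) := by field_simp; ring
  have hsqrt : √(t * σ ^ 2 / (1 + σ ^ 2) * (t / (1 + σ ^ 2))) = t * σ / (1 + σ ^ 2) := by
    rw [show t * σ ^ 2 / (1 + σ ^ 2) * (t / (1 + σ ^ 2)) = (t * σ / (1 + σ ^ 2)) ^ 2 by ring,
      sqrt_sq (by positivity)]
  rw [gaussSubst, hsub, hsqrt]
  field_simp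

lemma exists_pos_div_sub_mul_eq {a b : ℝ} (ha : 0 < a) (hb : 0 < b) (c : ℝ) :
    ∃ σ > 0, a / σ - b * σ = c := by
  have hΔ : 0 ≤ c ^ 2 + 4 * a * b := by positivity
  set r := √(c ^ 2 + 4 * a * b)
  have hc : |c| < r := sqrt_sq_eq_abs c ▸ sqrt_lt_sqrt (sq_nonneg c) (by nlinarith)
  have hpos : 0 < r - c := sub_pos.2 ((le_abs_self c).trans_lt hc)
  refine ⟨(r - c) / (2 * b), div_pos hpos (by positivity), ?_⟩
  field_simp
  linear_combination -sq_sqrt hΔ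

lemma gaussSubst_image {t a b : ℝ} (ht : 0 < t) (ha : 0 < a) (hb : 0 < b) :
    gaussSubst t a b '' Ioo 0 t = univ := by
  refine eq_univ_of_forall fun v ↦ ?_
  obtain ⟨σ, hσ, hv⟩ := exists_pos_div_sub_mul_eq ha hb (√t * v)
  refine ⟨t * σ ^ 2 / (1 + σ ^ 2), ⟨by positivity, ?_⟩, ?_⟩
  · rw [div_lt_iff₀ (by positivity)]
    linarith
  · rw [gaussSubst_mul_sq_div_one_add_sq a b ht hσ, hv]
    field_simp

lemma gaussSubst_strictAntiOn {t a b : ℝ} (ha : 0 < a) (hb : 0 < b) :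
    StrictAntiOn (gaussSubst t a b) (Ioo 0 t) := by
  refine strictAntiOn_of_hasDerivWithinAt_neg (f' := gaussSubstDeriv t a b) (convex_Ioo 0 t)
    (fun s hs ↦ (hasDerivAt_gaussSubst a b hs).continuousAt.continuousWithinAt) ?_ ?_ <;>
    rw [interior_Ioo] <;> intro s hs
  · exact (hasDerivAt_gaussSubst a b hs).hasDerivWithinAt
  exact gaussSubstDeriv_neg ha hb hs

lemma heatExponent_add_eq_gaussSubst {t a b s : ℝ} (hs : s ∈ Ioo 0 t) :
    -a ^ 2 / (4 * s) + -b ^ 2 / (4 * (t - s)) =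
      -(a + b) ^ 2 / (4 * t) + -gaussSubst t a b s ^ 2 / 4 := by
  obtain ⟨hs0, hst⟩ := hs
  have ht : 0 < t := hs0.trans hst
  rw [gaussSubst, div_pow, mul_pow, sq_sqrt ht.le, sq_sqrt (by positivity)]
  field_simp
  ring

lemma abs_div_sqrt_sq_add_le_one {c : ℝ} (hc : 0 ≤ c) (x : ℝ) : |x / √(x ^ 2 + c)| ≤ 1 := by
  rw [abs_div, abs_of_nonneg (sqrt_nonneg _), ← sqrt_sq_eq_abs]
  exact div_le_one_of_le₀ (sqrt_le_sqrt (by linarith)) (sqrt_nonneg _)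

noncomputable def substIntegrand (t a b v : ℝ) : ℝ :=
  exp (-(a + b) ^ 2 / (4 * t)) / (4 * π * t * √t) *
    ((a + b + (b - a) * (√t * v / √((√t * v) ^ 2 + 4 * a * b))) * exp (-v ^ 2 / 4))

lemma integral_substIntegrand {t a b : ℝ} (ht : 0 < t) (ha : 0 ≤ a) (hb : 0 ≤ b) :
    ∫ v, substIntegrand t a b v = (a + b) / t * heatKernel t (a + b) := by
  have hψ : ∀ v, |(b - a) * (√t * v / √((√t * v) ^ 2 + 4 * a * b))| ≤ |b - a| := fun v ↦ by
    rw [abs_mul]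
    exact mul_le_of_le_one_right (abs_nonneg _) (abs_div_sqrt_sq_add_le_one (by positivity) _)
  simp only [substIntegrand]
  rw [integral_const_mul, integral_add_odd_mul_exp_neg_sq_div_four
    (by fun_prop : Measurable _).aestronglyMeasurable hψ
    (fun v ↦ by rw [mul_neg, neg_sq, neg_div, mul_neg]), heatKernel_eq_exp_div ht]
  field_simp
  linear_combination 4 * (a + b) * sq_sqrt pi_pos.le

lemma integrand_eq_abs_gaussSubstDeriv_mul {t a b s : ℝ} (ha : 0 < a) (hb : 0 < b)
    (hs : s ∈ Ioo 0 t) :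
    a / s * heatKernel s a * (b / (t - s) * heatKernel (t - s) b) =
      |gaussSubstDeriv t a b s| * substIntegrand t a b (gaussSubst t a b s) := by
  obtain ⟨hs0, hst⟩ := hs
  have hts : 0 < t - s := sub_pos.2 hst
  have ht : 0 < t := hs0.trans hst
  have hD : √(s * (t - s)) = √s * √(t - s) := sqrt_mul hs0.le _
  have hDsq : √(s * (t - s)) ^ 2 = s * (t - s) := sq_sqrt (by positivity)
  have hU : √t * gaussSubst t a b s = (a * (t - s) - b * s) / √(s * (t - s)) := by
    rw [gaussSubst]; field_simp
  have hW : √((√t * gaussSubst t a b s) ^ 2 + 4 * a * b) =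
      (a * (t - s) + b * s) / √(s * (t - s)) := by
    rw [hU, ← sqrt_sq (by positivity : 0 ≤ (a * (t - s) + b * s) / √(s * (t - s)))]
    congr 1
    field_simp
    linear_combination (4 * a * b) * hDsq
  have hexp := congrArg exp (heatExponent_add_eq_gaussSubst (a := a) (b := b) ⟨hs0, hst⟩)
  rw [exp_add, exp_add] at hexp
  calc a / s * heatKernel s a * (b / (t - s) * heatKernel (t - s) b)
      = a * b / (4 * π * √(s * (t - s)) ^ 3) *
          (exp (-a ^ 2 / (4 * s)) * exp (-b ^ 2 / (4 * (t - s)))) := by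
        rw [heatKernel_eq_exp_div hs0, heatKernel_eq_exp_div hts, hD]
        field_simp
        rw [sq_sqrt hs0.le, sq_sqrt hts.le, sq_sqrt pi_pos.le]
        ring
    _ = _ := by
        rw [hexp, abs_of_neg (gaussSubstDeriv_neg ha hb ⟨hs0, hst⟩), gaussSubstDeriv,
          substIntegrand, hW, hU]
        field_simp
        ring

/-- For `t > 0` and `z₁, z₂ > 0`:
`∫₀ᵗ (z₁/s)·G(s,z₁)·(z₂/(t−s))·G(t−s,z₂) ds = ((z₁+z₂)/t)·G(t,z₁+z₂)`. -/
theorem stmt_2 (t z₁ z₂ : ℝ) (ht : 0 < t) (hz₁ : 0 < z₁) (hz₂ : 0 < z₂) :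
    ∫ s in (0:ℝ)..t, (z₁ / s) * heatKernel s z₁ * ((z₂ / (t - s)) * heatKernel (t - s) z₂)
      = ((z₁ + z₂) / t) * heatKernel t (z₁ + z₂) := by
  have hchange := integral_image_eq_integral_abs_deriv_smul measurableSet_Ioo
    (fun s hs ↦ (hasDerivAt_gaussSubst z₁ z₂ hs).hasDerivWithinAt)
    (gaussSubst_strictAntiOn (t := t) hz₁ hz₂).injOn (substIntegrand t z₁ z₂)
  rw [gaussSubst_image ht hz₁ hz₂, Measure.restrict_univ,
    integral_substIntegrand ht hz₁.le hz₂.le] at hchange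
  simp only [smul_eq_mul] at hchange
  rw [intervalIntegral.integral_of_le ht.le, integral_Ioc_eq_integral_Ioo, hchange]
  exact setIntegral_congr_fun measurableSet_Ioo
    fun s hs ↦ integrand_eq_abs_gaussSubstDeriv_mul hz₁ hz₂ hs
end

section
/- Let T > 0 and let u, c be time-dependent functions on a finite weighted network such that for each edge j the maps (t,x) ↦ u j t x and (t,x) ↦ c j t x are continuous on [0,T]×[0,1], u is continuously differentiable in t, u and c are twice continuously differentiable in x with all these derivatives continuous on [0,T]×[0,1], and ∂_t u j = ∂_xx u j − ∂_x(u j · ∂_x c j) on [0,T]×[0,1]. Assume that for every t ∈ [0,T] the function u(t) is continuous at the vertices and both u(t) and c(t) satisfy the Kirchhoff condition at every vertex. Then the total mass t ↦ ∑_j κ j · ∫₀¹ u j t x dx is constant on [0,T]. -/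
/-!
Integrating the equation over an edge turns `∂ₜu` into the boundary values of the flux
`J = ∂ₓu − u ∂ₓc`; integrating first in time (Fubini, everything being continuous on a
compact rectangle), the change of mass of edge `j` on `[0,t]` is `∫₀ᵗ (J_j(s,1) − J_j(s,0)) ds`.
Summing with the weights `κ_j` and grouping the boundary terms by vertex, continuity of `u` at
the vertices lets `u` be pulled out of each vertex sum as the common value `b(v)`, so the total
weighted flux is `∑_v (Kirchhoff defect of u at v) − b(v) · (Kirchhoff defect of c at v) = 0`.
-/

open Finset MeasureTheory Set

theorem integral_eq_sub_of_hasDerivWithinAt_Icc {a b : ℝ} (hab : a ≤ b) {f f' : ℝ → ℝ}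
    (hderiv : ∀ x ∈ Icc a b, HasDerivWithinAt f (f' x) (Icc a b) x)
    (hf' : ContinuousOn f' (Icc a b)) :
    ∫ x in a..b, f' x = f b - f a :=
  intervalIntegral.integral_eq_sub_of_hasDeriv_right_of_le hab
    (fun x hx => (hderiv x hx).continuousWithinAt)
    (fun x hx => ((hderiv x (Ioo_subset_Icc_self hx)).hasDerivAt
      (Icc_mem_nhds hx.1 hx.2)).hasDerivWithinAt)
    (hf'.intervalIntegrable_of_Icc hab)

theorem intervalIntegral_sub_eq_integral_boundary_flux {T a b : ℝ} (hab : a ≤ b)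
    {u ut F : ℝ → ℝ → ℝ}
    (hu : ContinuousOn (fun p : ℝ × ℝ => u p.1 p.2) (Icc 0 T ×ˢ Icc a b))
    (hut_cont : ContinuousOn (fun p : ℝ × ℝ => ut p.1 p.2) (Icc 0 T ×ˢ Icc a b))
    (hut : ∀ t ∈ Icc 0 T, ∀ x ∈ Icc a b,
      HasDerivWithinAt (fun s => u s x) (ut t x) (Icc 0 T) t)
    (hF : ∀ t ∈ Icc 0 T, ∀ x ∈ Icc a b, HasDerivWithinAt (F t) (ut t x) (Icc a b) x)
    {t : ℝ} (ht : t ∈ Icc 0 T) :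
    (∫ x in a..b, u t x) - ∫ x in a..b, u 0 x = ∫ s in 0..t, (F s b - F s a) := by
  obtain ⟨ht0, htT⟩ := ht
  have hsub : Icc 0 t ⊆ Icc 0 T := Icc_subset_Icc_right htT
  have hu_int : ∀ s ∈ Icc 0 T, IntervalIntegrable (u s) volume a b := fun s hs =>
    (hu.uncurry_left (f := u) s hs).intervalIntegrable_of_Icc hab
  have htime : ∀ x ∈ Icc a b, ∫ s in 0..t, ut s x = u t x - u 0 x := fun x hx =>
    integral_eq_sub_of_hasDerivWithinAt_Icc ht0 (fun s hs => (hut s (hsub hs) x hx).mono hsub)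
      ((hut_cont.uncurry_right (f := ut) x hx).mono hsub)
  have hspace : ∀ s ∈ Icc 0 T, ∫ x in a..b, ut s x = F s b - F s a := fun s hs =>
    integral_eq_sub_of_hasDerivWithinAt_Icc hab (hF s hs) (hut_cont.uncurry_left (f := ut) s hs)
  have hut_int : IntegrableOn (Function.uncurry ut) (uIoc 0 t ×ˢ uIoc a b) :=
    ((hut_cont.mono (prod_mono hsub subset_rfl)).integrableOn_compact
      (isCompact_Icc.prod isCompact_Icc)).mono_set
      (prod_mono (by simpa [uIoc_of_le ht0] using Set.Ioc_subset_Icc_self)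
        (by simpa [uIoc_of_le hab] using Set.Ioc_subset_Icc_self))
  calc (∫ x in a..b, u t x) - ∫ x in a..b, u 0 x
      = ∫ x in a..b, ∫ s in 0..t, ut s x := by
        rw [← intervalIntegral.integral_sub (hu_int t ⟨ht0, htT⟩)
          (hu_int 0 ⟨le_rfl, ht0.trans htT⟩)]
        exact intervalIntegral.integral_congr fun x hx =>
          (htime x (by rwa [uIcc_of_le hab] at hx)).symm
    _ = ∫ s in 0..t, ∫ x in a..b, ut s x :=
        (intervalIntegral_intervalIntegral_swap hut_int).symm
    _ = ∫ s in 0..t, (F s b - F s a) := intervalIntegral.integral_congr fun s hs =>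
        hspace s (hsub (by rwa [uIcc_of_le ht0] at hs))

section Network

variable {ι V R : Type*} [Fintype ι] [Fintype V] [DecidableEq V]

theorem sum_mul_comp_eq_sum_mul_sum_fiber [CommSemiring R] (e : ι → V) (b : V → R)
    (p : ι → R) :
    ∑ j, b (e j) * p j = ∑ v, b v * ∑ j ∈ univ.filter (fun j => e j = v), p j := by
  rw [← sum_fiberwise univ e]
  refine sum_congr rfl fun v _ => ?_
  rw [mul_sum]
  exact sum_congr rfl fun j hj => by rw [(mem_filter.1 hj).2]

theorem sum_mul_sub_mul_eq_zero_of_kirchhoff [CommRing R] (eI eT : ι → V) (b : V → R)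
    {p q : ι → R}
    (h : ∀ v, ∑ j ∈ univ.filter (fun j => eT j = v), p j
      - ∑ j ∈ univ.filter (fun j => eI j = v), q j = 0) :
    ∑ j, (b (eT j) * p j - b (eI j) * q j) = 0 := by
  rw [sum_sub_distrib, sum_mul_comp_eq_sum_mul_sum_fiber eT b p,
    sum_mul_comp_eq_sum_mul_sum_fiber eI b q, ← sum_sub_distrib]
  exact sum_eq_zero fun v _ => by rw [← mul_sub, h v, mul_zero]

theorem sum_mul_boundary_flux_eq_zero [CommRing R] (eI eT : ι → V) (κ : ι → R)
    {u₀ u₁ ux₀ ux₁ cx₀ cx₁ : ι → R} (b : V → R)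
    (hb : ∀ j, u₀ j = b (eI j) ∧ u₁ j = b (eT j))
    (hKu : ∀ v, ∑ j ∈ univ.filter (fun j => eT j = v), κ j * ux₁ j
      - ∑ j ∈ univ.filter (fun j => eI j = v), κ j * ux₀ j = 0)
    (hKc : ∀ v, ∑ j ∈ univ.filter (fun j => eT j = v), κ j * cx₁ j
      - ∑ j ∈ univ.filter (fun j => eI j = v), κ j * cx₀ j = 0) :
    ∑ j, κ j * ((ux₁ j - u₁ j * cx₁ j) - (ux₀ j - u₀ j * cx₀ j)) = 0 := calc
  _ = ∑ j, ((1 * (κ j * ux₁ j) - 1 * (κ j * ux₀ j))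
        - (b (eT j) * (κ j * cx₁ j) - b (eI j) * (κ j * cx₀ j))) :=
      sum_congr rfl fun j _ => by rw [(hb j).1, (hb j).2]; ring
  _ = 0 := by
      rw [sum_sub_distrib, sum_mul_sub_mul_eq_zero_of_kirchhoff eI eT (fun _ => 1) hKu,
        sum_mul_sub_mul_eq_zero_of_kirchhoff eI eT b hKc, sub_zero]

end Network

theorem stmt_6_general (n m : ℕ) (eI eT : Fin m → Fin n) (κ : Fin m → ℝ) (T : ℝ)
    (u ut ux uxx cx cxx : Fin m → ℝ → ℝ → ℝ)
    -- continuity of u, c and of all the derivatives on [0,T]×[0,1]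
    (hucont : ∀ j, ContinuousOn (fun p : ℝ × ℝ => u j p.1 p.2) (Set.Icc 0 T ×ˢ Set.Icc 0 1))
    (hutcont : ∀ j, ContinuousOn (fun p : ℝ × ℝ => ut j p.1 p.2) (Set.Icc 0 T ×ˢ Set.Icc 0 1))
    (huxcont : ∀ j, ContinuousOn (fun p : ℝ × ℝ => ux j p.1 p.2) (Set.Icc 0 T ×ˢ Set.Icc 0 1))
    (hcxcont : ∀ j, ContinuousOn (fun p : ℝ × ℝ => cx j p.1 p.2) (Set.Icc 0 T ×ˢ Set.Icc 0 1))
    -- ut = ∂_t u, ux = ∂_x u, uxx = ∂_xx u, cx = ∂_x c, cxx = ∂_xx c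
    (hut : ∀ j, ∀ t ∈ Set.Icc (0:ℝ) T, ∀ x ∈ Set.Icc (0:ℝ) 1,
      HasDerivWithinAt (fun s => u j s x) (ut j t x) (Set.Icc 0 T) t)
    (hux : ∀ j, ∀ t ∈ Set.Icc (0:ℝ) T, ∀ x ∈ Set.Icc (0:ℝ) 1,
      HasDerivWithinAt (fun y => u j t y) (ux j t x) (Set.Icc 0 1) x)
    (huxx : ∀ j, ∀ t ∈ Set.Icc (0:ℝ) T, ∀ x ∈ Set.Icc (0:ℝ) 1,
      HasDerivWithinAt (fun y => ux j t y) (uxx j t x) (Set.Icc 0 1) x)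
    (hcxx : ∀ j, ∀ t ∈ Set.Icc (0:ℝ) T, ∀ x ∈ Set.Icc (0:ℝ) 1,
      HasDerivWithinAt (fun y => cx j t y) (cxx j t x) (Set.Icc 0 1) x)
    -- the PDE ∂_t u = ∂_xx u − ∂_x(u ∂_x c)
    (hpde : ∀ j, ∀ t ∈ Set.Icc (0:ℝ) T, ∀ x ∈ Set.Icc (0:ℝ) 1,
      ut j t x = uxx j t x - (ux j t x * cx j t x + u j t x * cxx j t x))
    -- u(t) is continuous at the vertices
    (hucontv : ∀ t ∈ Set.Icc (0:ℝ) T, ∃ b : Fin n → ℝ,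
      ∀ j, u j t 0 = b (eI j) ∧ u j t 1 = b (eT j))
    -- Kirchhoff conditions for u(t) and c(t) at every vertex
    (hKu : ∀ t ∈ Set.Icc (0:ℝ) T, ∀ v : Fin n,
      ∑ j ∈ univ.filter (fun j => eT j = v), κ j * ux j t 1
        - ∑ j ∈ univ.filter (fun j => eI j = v), κ j * ux j t 0 = 0)
    (hKc : ∀ t ∈ Set.Icc (0:ℝ) T, ∀ v : Fin n,
      ∑ j ∈ univ.filter (fun j => eT j = v), κ j * cx j t 1
        - ∑ j ∈ univ.filter (fun j => eI j = v), κ j * cx j t 0 = 0) :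
    ∀ t ∈ Set.Icc (0:ℝ) T,
      ∑ j, κ j * ∫ x in (0:ℝ)..1, u j t x = ∑ j, κ j * ∫ x in (0:ℝ)..1, u j 0 x := by
  intro t ht
  set J : Fin m → ℝ → ℝ → ℝ := fun j s x => ux j s x - u j s x * cx j s x
  have hJ_deriv : ∀ j, ∀ s ∈ Icc (0:ℝ) T, ∀ x ∈ Icc (0:ℝ) 1,
      HasDerivWithinAt (J j s) (ut j s x) (Icc 0 1) x := fun j s hs x hx => by
    rw [hpde j s hs x hx]
    exact (huxx j s hs x hx).sub ((hux j s hs x hx).mul (hcxx j s hs x hx))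
  have hJ_cont : ∀ j, ∀ x ∈ Icc (0:ℝ) 1, ContinuousOn (fun s => J j s x) (Icc 0 T) :=
    fun j x hx => ((huxcont j).uncurry_right (f := ux j) x hx).sub
      (((hucont j).uncurry_right (f := u j) x hx).mul ((hcxcont j).uncurry_right (f := cx j) x hx))
  have hmass : ∀ j, κ j * (∫ x in (0:ℝ)..1, u j t x) - κ j * ∫ x in (0:ℝ)..1, u j 0 x
      = ∫ s in 0..t, κ j * (J j s 1 - J j s 0) := fun j => by
    rw [← mul_sub, intervalIntegral_sub_eq_integral_boundary_flux zero_le_one (hucont j)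
      (hutcont j) (hut j) (hJ_deriv j) ht, intervalIntegral.integral_const_mul]
  have hflux : ∀ s ∈ Icc (0:ℝ) T, ∑ j, κ j * (J j s 1 - J j s 0) = 0 := fun s hs => by
    obtain ⟨b, hb⟩ := hucontv s hs
    exact sum_mul_boundary_flux_eq_zero eI eT κ b hb (hKu s hs) (hKc s hs)
  have hsub : Icc 0 t ⊆ Icc (0:ℝ) T := Icc_subset_Icc_right ht.2
  have hflux_int : ∀ j, IntervalIntegrable (fun s => κ j * (J j s 1 - J j s 0)) volume 0 t :=
    fun j => ((continuousOn_const.mul ((hJ_cont j 1 (by simp)).sub (hJ_cont j 0 (by simp)))).mono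
      hsub).intervalIntegrable_of_Icc ht.1
  rw [← sub_eq_zero, ← sum_sub_distrib, sum_congr rfl fun j _ => hmass j,
    ← intervalIntegral.integral_finsetSum fun j _ => hflux_int j]
  exact (intervalIntegral.integral_congr fun s hs =>
    hflux s (hsub (by rwa [uIcc_of_le ht.1] at hs))).trans intervalIntegral.integral_zero

/-- **Conservation of mass for the Keller–Segel system on a network.**
On a finite weighted network (edges `j : Fin m` identified with `[0,1]`, initial vertex
`eI j`, terminal vertex `eT j`, weights `κ j > 0`), let `u, c` be time-dependent functions
on the network, continuous on `[0,T]×[0,1]` together with `∂_t u`, `∂_x u`, `∂_xx u`,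
`∂_x c`, `∂_xx c`, solving `∂_t u_j = ∂_xx u_j − ∂_x(u_j ∂_x c_j)`, with `u(t)` continuous
at the vertices and `u(t)`, `c(t)` satisfying the Kirchhoff condition at every vertex.
Then the total mass `t ↦ ∑_j κ_j ∫₀¹ u_j(t,x) dx` is constant on `[0,T]`. -/
theorem stmt_6 (n m : ℕ) (hm : 1 ≤ m) (eI eT : Fin m → Fin n) (hIT : ∀ j, eI j ≠ eT j)
    (κ : Fin m → ℝ) (hκ : ∀ j, 0 < κ j) (T : ℝ) (hT : 0 < T)
    (u c ut ux uxx cx cxx : Fin m → ℝ → ℝ → ℝ)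
    -- continuity of u, c and of all the derivatives on [0,T]×[0,1]
    (hucont : ∀ j, ContinuousOn (fun p : ℝ × ℝ => u j p.1 p.2) (Set.Icc 0 T ×ˢ Set.Icc 0 1))
    (hccont : ∀ j, ContinuousOn (fun p : ℝ × ℝ => c j p.1 p.2) (Set.Icc 0 T ×ˢ Set.Icc 0 1))
    (hutcont : ∀ j, ContinuousOn (fun p : ℝ × ℝ => ut j p.1 p.2) (Set.Icc 0 T ×ˢ Set.Icc 0 1))
    (huxcont : ∀ j, ContinuousOn (fun p : ℝ × ℝ => ux j p.1 p.2) (Set.Icc 0 T ×ˢ Set.Icc 0 1))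
    (huxxcont : ∀ j, ContinuousOn (fun p : ℝ × ℝ => uxx j p.1 p.2) (Set.Icc 0 T ×ˢ Set.Icc 0 1))
    (hcxcont : ∀ j, ContinuousOn (fun p : ℝ × ℝ => cx j p.1 p.2) (Set.Icc 0 T ×ˢ Set.Icc 0 1))
    (hcxxcont : ∀ j, ContinuousOn (fun p : ℝ × ℝ => cxx j p.1 p.2) (Set.Icc 0 T ×ˢ Set.Icc 0 1))
    -- ut = ∂_t u, ux = ∂_x u, uxx = ∂_xx u, cx = ∂_x c, cxx = ∂_xx c
    (hut : ∀ j, ∀ t ∈ Set.Icc (0:ℝ) T, ∀ x ∈ Set.Icc (0:ℝ) 1,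
      HasDerivWithinAt (fun s => u j s x) (ut j t x) (Set.Icc 0 T) t)
    (hux : ∀ j, ∀ t ∈ Set.Icc (0:ℝ) T, ∀ x ∈ Set.Icc (0:ℝ) 1,
      HasDerivWithinAt (fun y => u j t y) (ux j t x) (Set.Icc 0 1) x)
    (huxx : ∀ j, ∀ t ∈ Set.Icc (0:ℝ) T, ∀ x ∈ Set.Icc (0:ℝ) 1,
      HasDerivWithinAt (fun y => ux j t y) (uxx j t x) (Set.Icc 0 1) x)
    (hcx : ∀ j, ∀ t ∈ Set.Icc (0:ℝ) T, ∀ x ∈ Set.Icc (0:ℝ) 1,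
      HasDerivWithinAt (fun y => c j t y) (cx j t x) (Set.Icc 0 1) x)
    (hcxx : ∀ j, ∀ t ∈ Set.Icc (0:ℝ) T, ∀ x ∈ Set.Icc (0:ℝ) 1,
      HasDerivWithinAt (fun y => cx j t y) (cxx j t x) (Set.Icc 0 1) x)
    -- the PDE ∂_t u = ∂_xx u − ∂_x(u ∂_x c)
    (hpde : ∀ j, ∀ t ∈ Set.Icc (0:ℝ) T, ∀ x ∈ Set.Icc (0:ℝ) 1,
      ut j t x = uxx j t x - (ux j t x * cx j t x + u j t x * cxx j t x))
    -- u(t) is continuous at the vertices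
    (hucontv : ∀ t ∈ Set.Icc (0:ℝ) T, ∃ b : Fin n → ℝ,
      ∀ j, u j t 0 = b (eI j) ∧ u j t 1 = b (eT j))
    -- Kirchhoff conditions for u(t) and c(t) at every vertex
    (hKu : ∀ t ∈ Set.Icc (0:ℝ) T, ∀ v : Fin n,
      ∑ j ∈ univ.filter (fun j => eT j = v), κ j * ux j t 1
        - ∑ j ∈ univ.filter (fun j => eI j = v), κ j * ux j t 0 = 0)
    (hKc : ∀ t ∈ Set.Icc (0:ℝ) T, ∀ v : Fin n,
      ∑ j ∈ univ.filter (fun j => eT j = v), κ j * cx j t 1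
        - ∑ j ∈ univ.filter (fun j => eI j = v), κ j * cx j t 0 = 0) :
    ∀ t ∈ Set.Icc (0:ℝ) T,
      ∑ j, κ j * ∫ x in (0:ℝ)..1, u j t x = ∑ j, κ j * ∫ x in (0:ℝ)..1, u j 0 x :=
  stmt_6_general n m eI eT κ T u ut ux uxx cx cxx hucont hutcont huxcont hcxcont hut hux huxx hcxx
    hpde hucontv hKu hKc
end

section
/- Let T > 0 and let u, c be time-dependent functions on a finite weighted network such that for each edge j the maps (t,x) ↦ u j t x and (t,x) ↦ c j t x are continuous on [0,T]×[0,1], u is continuously differentiable in t, u and c are twice continuously differentiable in x with all these derivatives continuous on [0,T]×[0,1] (in particular ∂_x c is bounded on [0,T]×[0,1]), and ∂_t u j = ∂_xx u j − ∂_x(u j · ∂_x c j) on [0,T]×[0,1]. Assume that for every t ∈ [0,T] the function u(t) is continuous at the vertices and both u(t) and c(t) satisfy the Kirchhoff condition at every vertex. If u j 0 x ≥ 0 for every edge j and every x ∈ [0,1], then u j t x ≥ 0 for every j, every x ∈ [0,1] and every t ∈ [0,T]. -/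
/-!
Suppose `u` becomes negative. For a small `ε > 0` and `r` larger than every `|∂ₓₓ c|`, the function
`w = e^{-r t} u + ε (x² - x)` then has a negative global minimum over the network and `[0,T]`,
attained at some `t > 0` because `w(0) ≥ -ε/4`. The minimum cannot sit at a vertex: there
`∂ₓ w` points into every incident edge, so the Kirchhoff sum of `∂ₓ w` is `≤ 0`, whereas the
Kirchhoff condition for `u` makes it equal to `ε` times the total weight of the incident edges.
Nor can it sit inside an edge: there `∂ₜ w ≤ 0`, `∂ₓ w = 0`, `∂ₓₓ w ≥ 0`, and the equation
turns these into `∂ₜ w > 0`, the weight `e^{-r t}` absorbing the zeroth-order term `u ∂ₓₓ c`.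
-/

open Finset Filter Topology Real
open Set (Icc Ioo Ioc left_mem_Icc right_mem_Icc Ioo_subset_Icc_self Ioc_subset_Icc_self)

lemma IsMinOn.hasDerivWithinAt_mul_sub_nonneg {f : ℝ → ℝ} {s : Set ℝ} {f' p y : ℝ}
    (hmin : IsMinOn f s p) (hs : Convex ℝ s) (hp : p ∈ s) (hy : y ∈ s)
    (hf : HasDerivWithinAt f f' s p) : 0 ≤ f' * (y - p) := by
  have hcone : y - p ∈ posTangentConeAt s p :=
    sub_mem_posTangentConeAt_of_segment_subset (hs.segment_subset hp hy)
  simpa [mul_comm] using hmin.localize.hasFDerivWithinAt_nonneg hf.hasFDerivWithinAt hcone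

lemma IsMinOn.hasDerivWithinAt_nonneg_of_lt {f : ℝ → ℝ} {s : Set ℝ} {f' p y : ℝ}
    (hmin : IsMinOn f s p) (hs : Convex ℝ s) (hp : p ∈ s) (hy : y ∈ s) (hpy : p < y)
    (hf : HasDerivWithinAt f f' s p) : 0 ≤ f' :=
  nonneg_of_mul_nonneg_left (hmin.hasDerivWithinAt_mul_sub_nonneg hs hp hy hf) (sub_pos.2 hpy)

lemma IsMinOn.hasDerivWithinAt_nonpos_of_lt {f : ℝ → ℝ} {s : Set ℝ} {f' p y : ℝ}
    (hmin : IsMinOn f s p) (hs : Convex ℝ s) (hp : p ∈ s) (hy : y ∈ s) (hyp : y < p)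
    (hf : HasDerivWithinAt f f' s p) : f' ≤ 0 :=
  nonpos_of_mul_nonneg_left (hmin.hasDerivWithinAt_mul_sub_nonneg hs hp hy hf) (sub_neg.2 hyp)

/-- If `f'' < 0` at a local minimum, the second derivative test makes it also a local maximum,
so `f` is locally constant and `f'' = 0`. -/
lemma IsLocalMin.hasDerivAt_second_nonneg {f f' : ℝ → ℝ} {p D : ℝ} (hmin : IsLocalMin f p)
    (hf : ∀ᶠ y in 𝓝 p, HasDerivAt f (f' y) y) (hf' : HasDerivAt f' D p) : 0 ≤ D := by
  by_contra! hD
  have hderiv : deriv f =ᶠ[𝓝 p] f' := hf.mono fun y hy => hy.deriv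
  have hmax : IsLocalMax f p :=
    isLocalMax_of_deriv_deriv_neg (by rwa [hderiv.deriv_eq, hf'.deriv])
      (by rw [hderiv.eq_of_nhds]; exact hmin.hasDerivAt_eq_zero hf.self_of_nhds)
      hf.self_of_nhds.continuousAt
  have hconst : f =ᶠ[𝓝 p] fun _ => f p := (hmin.and hmax).mono fun y h => le_antisymm h.2 h.1
  have hf'_zero : f' =ᶠ[𝓝 p] fun _ => 0 := by
    filter_upwards [hconst.eventually_nhds, hf] with y hy hyd
    exact hyd.unique ((hasDerivAt_const y (f p)).congr_of_eventuallyEq hy)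
  exact hD.ne (hf'.unique ((hasDerivAt_const p (0 : ℝ)).congr_of_eventuallyEq hf'_zero))

lemma IsCompact.exists_forall_abs_le {ι X : Type*} [Fintype ι] [TopologicalSpace X] {K : Set X}
    (hK : IsCompact K) {f : ι → X → ℝ} (hf : ∀ i, ContinuousOn (f i) K) :
    ∃ M, 0 ≤ M ∧ ∀ i, ∀ p ∈ K, |f i p| ≤ M := by
  obtain ⟨C, hC⟩ := hK.exists_bound_of_continuousOn (continuousOn_pi.2 hf)
  exact ⟨max C 0, le_max_right _ _, fun i p hp =>
    (norm_le_pi_norm (fun i => f i p) i).trans ((hC p hp).trans (le_max_left _ _))⟩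

lemma IsCompact.exists_forall_le_of_fintype {ι X : Type*} [Fintype ι] [Nonempty ι]
    [TopologicalSpace X] {K : Set X} (hK : IsCompact K) (hne : K.Nonempty) {f : ι → X → ℝ}
    (hf : ∀ i, ContinuousOn (f i) K) : ∃ i₀, ∃ p₀ ∈ K, ∀ i, ∀ p ∈ K, f i₀ p₀ ≤ f i p := by
  choose q hqK hq using fun i => hK.exists_isMinOn hne (hf i)
  obtain ⟨i₀, -, hi₀⟩ := Finset.univ.exists_min_image (fun i => f i (q i)) univ_nonempty
  exact ⟨i₀, q i₀, hqK i₀, fun i p hp => (hi₀ i (mem_univ i)).trans (hq i hp)⟩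

lemma hasDerivAt_mul_sq_sub (ε x : ℝ) :
    HasDerivAt (fun y => ε * (y ^ 2 - y)) (ε * (2 * x - 1)) x := by
  simpa using ((hasDerivAt_pow 2 x).sub (hasDerivAt_id x)).const_mul ε

section Network

variable {m n : ℕ} (eI eT : Fin m → Fin n) (κ : Fin m → ℝ)

/-- `netFlux eI eT κ gx v = 0` is the Kirchhoff condition at `v`. -/
def netFlux (gx : Fin m → ℝ → ℝ) (v : Fin n) : ℝ :=
  ∑ j ∈ univ.filter (fun j => eT j = v), κ j * gx j 1
    - ∑ j ∈ univ.filter (fun j => eI j = v), κ j * gx j 0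

variable {eI eT κ}

lemma netFlux_nonpos_of_isMin_at_vertex (hκ : ∀ j, 0 ≤ κ j) {g gx : Fin m → ℝ → ℝ}
    (hgx : ∀ j, ∀ x ∈ Icc (0 : ℝ) 1, HasDerivWithinAt (g j) (gx j x) (Icc 0 1) x)
    {b : Fin n → ℝ} (hb : ∀ j, g j 0 = b (eI j) ∧ g j 1 = b (eT j)) {v : Fin n}
    (hmin : ∀ j, ∀ x ∈ Icc (0 : ℝ) 1, b v ≤ g j x) : netFlux eI eT κ gx v ≤ 0 := by
  have h0 : (0 : ℝ) ∈ Icc (0 : ℝ) 1 := left_mem_Icc.2 zero_le_one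
  have h1 : (1 : ℝ) ∈ Icc (0 : ℝ) 1 := right_mem_Icc.2 zero_le_one
  refine sub_nonpos.2 ((sum_nonpos fun j hj => ?_).trans (sum_nonneg fun j hj => ?_))
  · have hjmin : IsMinOn (g j) (Icc 0 1) 1 := fun x hx => by
      simpa [(hb j).2, (mem_filter.1 hj).2] using hmin j x hx
    exact mul_nonpos_of_nonneg_of_nonpos (hκ j) <|
      hjmin.hasDerivWithinAt_nonpos_of_lt (convex_Icc 0 1) h1 h0 zero_lt_one (hgx j 1 h1)
  · have hjmin : IsMinOn (g j) (Icc 0 1) 0 := fun x hx => by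
      simpa [(hb j).1, (mem_filter.1 hj).2] using hmin j x hx
    exact mul_nonneg (hκ j) <|
      hjmin.hasDerivWithinAt_nonneg_of_lt (convex_Icc 0 1) h0 h1 zero_lt_one (hgx j 0 h0)

lemma netFlux_tilt (gx : Fin m → ℝ → ℝ) (c ε : ℝ) (v : Fin n) :
    netFlux eI eT κ (fun j x => c * gx j x + ε * (2 * x - 1)) v
      = c * netFlux eI eT κ gx v
        + ε * (∑ j ∈ univ.filter (fun j => eT j = v), κ j
          + ∑ j ∈ univ.filter (fun j => eI j = v), κ j) := by
  have h1 (j : Fin m) : κ j * (c * gx j 1 + ε * (2 * 1 - 1)) = c * (κ j * gx j 1) + ε * κ j := by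
    ring
  have h0 (j : Fin m) : κ j * (c * gx j 0 + ε * (2 * 0 - 1)) = c * (κ j * gx j 0) - ε * κ j := by
    ring
  simp only [netFlux, h1, h0, sum_add_distrib, sum_sub_distrib, ← mul_sum]
  ring

lemma sum_incident_weights_pos (hκ : ∀ j, 0 < κ j) {v : Fin n} {j₀ : Fin m}
    (hj₀ : eI j₀ = v ∨ eT j₀ = v) :
    0 < ∑ j ∈ univ.filter (fun j => eT j = v), κ j
      + ∑ j ∈ univ.filter (fun j => eI j = v), κ j := by
  have hsum (p : Fin m → Prop) [DecidablePred p] : 0 ≤ ∑ j ∈ univ.filter p, κ j :=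
    sum_nonneg fun j _ => (hκ j).le
  have hpos (p : Fin m → Prop) [DecidablePred p] (h : p j₀) : 0 < ∑ j ∈ univ.filter p, κ j :=
    sum_pos' (fun j _ => (hκ j).le) ⟨j₀, mem_filter.2 ⟨mem_univ _, h⟩, hκ j₀⟩
  rcases hj₀ with h | h
  · exact add_pos_of_nonneg_of_pos (hsum _) (hpos _ h)
  · exact add_pos_of_pos_of_nonneg (hpos _ h) (hsum _)

/-- At a vertex, the tilt `ε (x² - x)` makes `∂ₓ` point strictly into every incident edge. -/
lemma tilt_not_isMin_at_vertex (hκ : ∀ j, 0 < κ j) {g gx : Fin m → ℝ → ℝ} {b : Fin n → ℝ}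
    {c ε : ℝ} (hε : 0 < ε)
    (hgx : ∀ j, ∀ x ∈ Icc (0 : ℝ) 1, HasDerivWithinAt (g j) (gx j x) (Icc 0 1) x)
    (hb : ∀ j, g j 0 = b (eI j) ∧ g j 1 = b (eT j)) (hK : ∀ v, netFlux eI eT κ gx v = 0)
    {j₀ : Fin m} {e : ℝ} (he : e = 0 ∨ e = 1)
    (hmin : ∀ j, ∀ x ∈ Icc (0 : ℝ) 1, c * g j₀ e + ε * (e ^ 2 - e) ≤ c * g j x + ε * (x ^ 2 - x)) :
    False := by
  obtain ⟨v, hv, hj₀⟩ : ∃ v, c * g j₀ e + ε * (e ^ 2 - e) = c * b v ∧ (eI j₀ = v ∨ eT j₀ = v) := by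
    rcases he with rfl | rfl
    · exact ⟨eI j₀, by simp [(hb j₀).1], Or.inl rfl⟩
    · exact ⟨eT j₀, by simp [(hb j₀).2], Or.inr rfl⟩
  have hflux := netFlux_nonpos_of_isMin_at_vertex (eI := eI) (eT := eT) (κ := κ)
    (fun j => (hκ j).le) (g := fun j x => c * g j x + ε * (x ^ 2 - x)) (b := fun v => c * b v)
    (fun j x hx => ((hgx j x hx).const_mul c).add (hasDerivAt_mul_sq_sub ε x).hasDerivWithinAt)
    (fun j => by simp [(hb j).1, (hb j).2]) (v := v) (fun j x hx => hv ▸ hmin j x hx)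
  rw [netFlux_tilt, hK, mul_zero, zero_add] at hflux
  exact hflux.not_gt (mul_pos hε (sum_incident_weights_pos hκ hj₀))

end Network

noncomputable def tilted (r ε : ℝ) (u : ℝ → ℝ → ℝ) (t x : ℝ) : ℝ :=
  exp (-(r * t)) * u t x + ε * (x ^ 2 - x)

lemma ContinuousOn.tilted {u : ℝ → ℝ → ℝ} {K : Set (ℝ × ℝ)}
    (hu : ContinuousOn (fun p : ℝ × ℝ => u p.1 p.2) K) (r ε : ℝ) :
    ContinuousOn (fun p : ℝ × ℝ => tilted r ε u p.1 p.2) K := by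
  unfold _root_.tilted
  exact ((Continuous.continuousOn (by fun_prop)).mul hu).add
    (Continuous.continuousOn (by fun_prop))

lemma tilted_le {u : ℝ → ℝ → ℝ} {r ε t x : ℝ} (hε : 0 ≤ ε) (hx : x ∈ Icc (0 : ℝ) 1) :
    tilted r ε u t x ≤ exp (-(r * t)) * u t x := by
  have : ε * (x ^ 2 - x) ≤ 0 := mul_nonpos_of_nonneg_of_nonpos hε (by nlinarith [hx.1, hx.2])
  unfold tilted
  linarith

lemma neg_quarter_le_tilted_zero {u : ℝ → ℝ → ℝ} {r ε x : ℝ} (hε : 0 ≤ ε) (hu : 0 ≤ u 0 x) :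
    -(ε / 4) ≤ tilted r ε u 0 x := by
  have : -(ε / 4) ≤ ε * (x ^ 2 - x) := by nlinarith [mul_nonneg hε (sq_nonneg (x - 1 / 2))]
  simp only [tilted, mul_zero, neg_zero, exp_zero, one_mul]
  linarith

lemma hasDerivWithinAt_tilted_time {u : ℝ → ℝ → ℝ} {r ε ut t x : ℝ} {s : Set ℝ}
    (h : HasDerivWithinAt (fun s => u s x) ut s t) :
    HasDerivWithinAt (fun s => tilted r ε u s x) (exp (-(r * t)) * (ut - r * u t x)) s t := by
  have hexp : HasDerivAt (fun s => exp (-(r * s))) (exp (-(r * t)) * -r) t := by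
    simpa using ((hasDerivAt_id t).const_mul r).neg.exp
  exact ((hexp.hasDerivWithinAt.mul h).add_const (ε * (x ^ 2 - x))).congr_deriv (by ring)

/-- The choice `ε (3 + M₁) = -a` leaves room for the drift `ε M₁`, the diffusion `2 ε` and the
tilt `ε / 4`. -/
lemma tilted_time_deriv_pos {E ε a M₁ M₂ x u ux uxx β γ : ℝ} (hx : x ∈ Icc (0 : ℝ) 1)
    (hβ : |β| ≤ M₁) (hγ : |γ| ≤ M₂) (ha : a < 0) (hεa : ε * (3 + M₁) = -a)
    (hwx : E * ux + ε * (2 * x - 1) = 0) (hwxx : 0 ≤ E * uxx + 2 * ε) (hw : E * u + ε * (x ^ 2 - x) ≤ a) :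
    0 < E * (uxx - (ux * β + u * γ) - (M₂ + 1) * u) := by
  obtain ⟨hβl, hβu⟩ := abs_le.1 hβ
  have hγl := (abs_le.1 hγ).1
  have hM₁ : 0 ≤ M₁ := (abs_nonneg β).trans hβ
  have hε : 0 < ε := by nlinarith
  have hdrift : -(ε * M₁) ≤ ε * (2 * x - 1) * β := by
    nlinarith [mul_nonneg (mul_nonneg hε.le (by linarith [hx.2] : (0:ℝ) ≤ 2 - 2 * x))
        (by linarith : 0 ≤ M₁ - β),
      mul_nonneg (mul_nonneg hε.le (by linarith [hx.1] : (0:ℝ) ≤ 2 * x))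
        (by linarith : 0 ≤ M₁ + β)]
  have hu : E * u ≤ a + ε / 4 := by nlinarith [mul_nonneg hε.le (sq_nonneg (x - 1 / 2))]
  have hu_neg : E * u < 0 := by nlinarith
  have hreact : -(a + ε / 4) ≤ -(E * u) * (γ + M₂ + 1) := by
    nlinarith [mul_nonneg (neg_nonneg.2 hu_neg.le) (by linarith : 0 ≤ γ + M₂)]
  calc 0 < -2 * ε - ε * M₁ - (a + ε / 4) := by nlinarith
    _ ≤ (E * uxx) + ε * (2 * x - 1) * β - (E * u) * (γ + M₂ + 1) := by linarith
    _ = E * (uxx - (ux * β + u * γ) - (M₂ + 1) * u) := by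
      rw [show ε * (2 * x - 1) = -(E * ux) by linarith]
      ring

lemma tilted_not_isMin_interior {u ut ux uxx : ℝ → ℝ → ℝ} {T ε a β γ M₁ M₂ t x : ℝ}
    (ht : t ∈ Ioc 0 T) (hx : x ∈ Ioo (0 : ℝ) 1)
    (hut : HasDerivWithinAt (fun s => u s x) (ut t x) (Icc 0 T) t)
    (hux : ∀ y ∈ Icc (0 : ℝ) 1, HasDerivWithinAt (u t) (ux t y) (Icc 0 1) y)
    (huxx : HasDerivWithinAt (ux t) (uxx t x) (Icc 0 1) x)
    (hpde : ut t x = uxx t x - (ux t x * β + u t x * γ))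
    (hβ : |β| ≤ M₁) (hγ : |γ| ≤ M₂) (ha : a < 0) (hεa : ε * (3 + M₁) = -a)
    (hmin_t : IsMinOn (fun s => tilted (M₂ + 1) ε u s x) (Icc 0 T) t)
    (hmin_x : IsMinOn (tilted (M₂ + 1) ε u t) (Icc 0 1) x)
    (hle : tilted (M₂ + 1) ε u t x ≤ a) : False := by
  set E := exp (-((M₂ + 1) * t))
  have hwt : E * (ut t x - (M₂ + 1) * u t x) ≤ 0 :=
    hmin_t.hasDerivWithinAt_nonpos_of_lt (convex_Icc 0 T) (Ioc_subset_Icc_self ht)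
      (left_mem_Icc.2 (ht.1.le.trans ht.2)) ht.1 (hasDerivWithinAt_tilted_time hut)
  have hloc : IsLocalMin (tilted (M₂ + 1) ε u t) x := hmin_x.isLocalMin (Icc_mem_nhds hx.1 hx.2)
  have hwx : ∀ᶠ y in 𝓝 x,
      HasDerivAt (tilted (M₂ + 1) ε u t) (E * ux t y + ε * (2 * y - 1)) y := by
    filter_upwards [Ioo_mem_nhds hx.1 hx.2] with y hy
    exact ((hux y (Ioo_subset_Icc_self hy)).hasDerivAt (Icc_mem_nhds hy.1 hy.2)).const_mul E
      |>.add (hasDerivAt_mul_sq_sub ε y)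
  have hwxx : HasDerivAt (fun y => E * ux t y + ε * (2 * y - 1)) (E * uxx t x + 2 * ε) x :=
    (((huxx.hasDerivAt (Icc_mem_nhds hx.1 hx.2)).const_mul E).add
      (((hasDerivAt_id x).const_mul 2).sub_const 1 |>.const_mul ε)).congr_deriv (by ring)
  have hpos := tilted_time_deriv_pos (Ioo_subset_Icc_self hx) hβ hγ ha hεa
    (hloc.hasDerivAt_eq_zero hwx.self_of_nhds) (hloc.hasDerivAt_second_nonneg hwx hwxx) hle
  rw [← hpde] at hpos
  exact hwt.not_gt hpos

theorem stmt_7_general (n m : ℕ) (eI eT : Fin m → Fin n)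
    (κ : Fin m → ℝ) (hκ : ∀ j, 0 < κ j) (T : ℝ)
    (u ut ux uxx cx cxx : Fin m → ℝ → ℝ → ℝ)
    -- continuity of u, c and of all the derivatives on [0,T]×[0,1]
    (hucont : ∀ j, ContinuousOn (fun p : ℝ × ℝ => u j p.1 p.2) (Set.Icc 0 T ×ˢ Set.Icc 0 1))
    (hcxcont : ∀ j, ContinuousOn (fun p : ℝ × ℝ => cx j p.1 p.2) (Set.Icc 0 T ×ˢ Set.Icc 0 1))
    (hcxxcont : ∀ j, ContinuousOn (fun p : ℝ × ℝ => cxx j p.1 p.2) (Set.Icc 0 T ×ˢ Set.Icc 0 1))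
    -- ut = ∂_t u, ux = ∂_x u, uxx = ∂_xx u, cx = ∂_x c, cxx = ∂_xx c
    (hut : ∀ j, ∀ t ∈ Set.Icc (0:ℝ) T, ∀ x ∈ Set.Icc (0:ℝ) 1,
      HasDerivWithinAt (fun s => u j s x) (ut j t x) (Set.Icc 0 T) t)
    (hux : ∀ j, ∀ t ∈ Set.Icc (0:ℝ) T, ∀ x ∈ Set.Icc (0:ℝ) 1,
      HasDerivWithinAt (fun y => u j t y) (ux j t x) (Set.Icc 0 1) x)
    (huxx : ∀ j, ∀ t ∈ Set.Icc (0:ℝ) T, ∀ x ∈ Set.Icc (0:ℝ) 1,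
      HasDerivWithinAt (fun y => ux j t y) (uxx j t x) (Set.Icc 0 1) x)
    -- the PDE ∂_t u = ∂_xx u − ∂_x(u ∂_x c)
    (hpde : ∀ j, ∀ t ∈ Set.Icc (0:ℝ) T, ∀ x ∈ Set.Icc (0:ℝ) 1,
      ut j t x = uxx j t x - (ux j t x * cx j t x + u j t x * cxx j t x))
    -- u(t) is continuous at the vertices
    (hucontv : ∀ t ∈ Set.Icc (0:ℝ) T, ∃ b : Fin n → ℝ,
      ∀ j, u j t 0 = b (eI j) ∧ u j t 1 = b (eT j))
    -- Kirchhoff conditions for u(t) and c(t) at every vertex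
    (hKu : ∀ t ∈ Set.Icc (0:ℝ) T, ∀ v : Fin n,
      ∑ j ∈ univ.filter (fun j => eT j = v), κ j * ux j t 1
        - ∑ j ∈ univ.filter (fun j => eI j = v), κ j * ux j t 0 = 0)
    -- nonnegative initial datum
    (hupos0 : ∀ j, ∀ x ∈ Set.Icc (0:ℝ) 1, 0 ≤ u j 0 x) :
    ∀ j, ∀ t ∈ Set.Icc (0:ℝ) T, ∀ x ∈ Set.Icc (0:ℝ) 1, 0 ≤ u j t x := by
  by_contra! ⟨j₀, t₀, ht₀, x₀, hx₀, hu₀⟩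
  have hK : IsCompact (Icc 0 T ×ˢ Icc (0 : ℝ) 1) := isCompact_Icc.prod isCompact_Icc
  obtain ⟨M₁, hM₁, hcx⟩ := hK.exists_forall_abs_le hcxcont
  obtain ⟨M₂, -, hcxx⟩ := hK.exists_forall_abs_le hcxxcont
  set a := exp (-((M₂ + 1) * t₀)) * u j₀ t₀ x₀
  have ha : a < 0 := mul_neg_of_pos_of_neg (exp_pos _) hu₀
  set ε := -a / (3 + M₁)
  have hεa : ε * (3 + M₁) = -a := div_mul_cancel₀ _ (by linarith)
  have hε : 0 < ε := div_pos (neg_pos.2 ha) (by linarith)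
  have : Nonempty (Fin m) := ⟨j₀⟩
  obtain ⟨j₁, ⟨t₁, x₁⟩, ⟨ht₁, hx₁⟩, hmin⟩ := hK.exists_forall_le_of_fintype
    ⟨(t₀, x₀), ht₀, hx₀⟩ fun j => (hucont j).tilted (M₂ + 1) ε
  have hle : tilted (M₂ + 1) ε (u j₁) t₁ x₁ ≤ a :=
    (hmin j₀ (t₀, x₀) ⟨ht₀, hx₀⟩).trans (tilted_le hε.le hx₀)
  have ht₁_pos : 0 < t₁ := by
    refine ht₁.1.lt_of_ne fun h => ?_
    have := neg_quarter_le_tilted_zero (r := M₂ + 1) hε.le (hupos0 j₁ x₁ hx₁)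
    rw [h] at this
    nlinarith
  by_cases hx_end : x₁ = 0 ∨ x₁ = 1
  · obtain ⟨b, hb⟩ := hucontv t₁ ht₁
    exact tilt_not_isMin_at_vertex hκ hε (hux · t₁ ht₁) hb (hKu t₁ ht₁) hx_end
      fun j x hx => hmin j (t₁, x) ⟨ht₁, hx⟩
  obtain ⟨hx_ne_0, hx_ne_1⟩ := not_or.1 hx_end
  exact tilted_not_isMin_interior ⟨ht₁_pos, ht₁.2⟩
    ⟨hx₁.1.lt_of_ne' hx_ne_0, hx₁.2.lt_of_ne hx_ne_1⟩ (hut j₁ t₁ ht₁ x₁ hx₁) (hux j₁ t₁ ht₁)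
    (huxx j₁ t₁ ht₁ x₁ hx₁) (hpde j₁ t₁ ht₁ x₁ hx₁) (hcx j₁ (t₁, x₁) ⟨ht₁, hx₁⟩)
    (hcxx j₁ (t₁, x₁) ⟨ht₁, hx₁⟩) ha hεa (fun s hs => hmin j₁ (s, x₁) ⟨hs, hx₁⟩)
    (fun y hy => hmin j₁ (t₁, y) ⟨ht₁, hy⟩) hle

/-- **Positivity for the Keller–Segel system on a network.**
With the same setting and hypotheses as for mass conservation (in particular `∂_x c` is
continuous on the compact set `[0,T]×[0,1]`, hence bounded), if the initial datum satisfies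
`u_j(0,x) ≥ 0` for every edge `j` and every `x ∈ [0,1]`, then `u_j(t,x) ≥ 0` for every edge
`j`, every `x ∈ [0,1]` and every `t ∈ [0,T]`. -/
theorem stmt_7 (n m : ℕ) (hm : 1 ≤ m) (eI eT : Fin m → Fin n) (hIT : ∀ j, eI j ≠ eT j)
    (κ : Fin m → ℝ) (hκ : ∀ j, 0 < κ j) (T : ℝ) (hT : 0 < T)
    (u c ut ux uxx cx cxx : Fin m → ℝ → ℝ → ℝ)
    -- continuity of u, c and of all the derivatives on [0,T]×[0,1]
    (hucont : ∀ j, ContinuousOn (fun p : ℝ × ℝ => u j p.1 p.2) (Set.Icc 0 T ×ˢ Set.Icc 0 1))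
    (hccont : ∀ j, ContinuousOn (fun p : ℝ × ℝ => c j p.1 p.2) (Set.Icc 0 T ×ˢ Set.Icc 0 1))
    (hutcont : ∀ j, ContinuousOn (fun p : ℝ × ℝ => ut j p.1 p.2) (Set.Icc 0 T ×ˢ Set.Icc 0 1))
    (huxcont : ∀ j, ContinuousOn (fun p : ℝ × ℝ => ux j p.1 p.2) (Set.Icc 0 T ×ˢ Set.Icc 0 1))
    (huxxcont : ∀ j, ContinuousOn (fun p : ℝ × ℝ => uxx j p.1 p.2) (Set.Icc 0 T ×ˢ Set.Icc 0 1))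
    (hcxcont : ∀ j, ContinuousOn (fun p : ℝ × ℝ => cx j p.1 p.2) (Set.Icc 0 T ×ˢ Set.Icc 0 1))
    (hcxxcont : ∀ j, ContinuousOn (fun p : ℝ × ℝ => cxx j p.1 p.2) (Set.Icc 0 T ×ˢ Set.Icc 0 1))
    -- ut = ∂_t u, ux = ∂_x u, uxx = ∂_xx u, cx = ∂_x c, cxx = ∂_xx c
    (hut : ∀ j, ∀ t ∈ Set.Icc (0:ℝ) T, ∀ x ∈ Set.Icc (0:ℝ) 1,
      HasDerivWithinAt (fun s => u j s x) (ut j t x) (Set.Icc 0 T) t)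
    (hux : ∀ j, ∀ t ∈ Set.Icc (0:ℝ) T, ∀ x ∈ Set.Icc (0:ℝ) 1,
      HasDerivWithinAt (fun y => u j t y) (ux j t x) (Set.Icc 0 1) x)
    (huxx : ∀ j, ∀ t ∈ Set.Icc (0:ℝ) T, ∀ x ∈ Set.Icc (0:ℝ) 1,
      HasDerivWithinAt (fun y => ux j t y) (uxx j t x) (Set.Icc 0 1) x)
    (hcx : ∀ j, ∀ t ∈ Set.Icc (0:ℝ) T, ∀ x ∈ Set.Icc (0:ℝ) 1,
      HasDerivWithinAt (fun y => c j t y) (cx j t x) (Set.Icc 0 1) x)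
    (hcxx : ∀ j, ∀ t ∈ Set.Icc (0:ℝ) T, ∀ x ∈ Set.Icc (0:ℝ) 1,
      HasDerivWithinAt (fun y => cx j t y) (cxx j t x) (Set.Icc 0 1) x)
    -- the PDE ∂_t u = ∂_xx u − ∂_x(u ∂_x c)
    (hpde : ∀ j, ∀ t ∈ Set.Icc (0:ℝ) T, ∀ x ∈ Set.Icc (0:ℝ) 1,
      ut j t x = uxx j t x - (ux j t x * cx j t x + u j t x * cxx j t x))
    -- u(t) is continuous at the vertices
    (hucontv : ∀ t ∈ Set.Icc (0:ℝ) T, ∃ b : Fin n → ℝ,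
      ∀ j, u j t 0 = b (eI j) ∧ u j t 1 = b (eT j))
    -- Kirchhoff conditions for u(t) and c(t) at every vertex
    (hKu : ∀ t ∈ Set.Icc (0:ℝ) T, ∀ v : Fin n,
      ∑ j ∈ univ.filter (fun j => eT j = v), κ j * ux j t 1
        - ∑ j ∈ univ.filter (fun j => eI j = v), κ j * ux j t 0 = 0)
    (hKc : ∀ t ∈ Set.Icc (0:ℝ) T, ∀ v : Fin n,
      ∑ j ∈ univ.filter (fun j => eT j = v), κ j * cx j t 1
        - ∑ j ∈ univ.filter (fun j => eI j = v), κ j * cx j t 0 = 0)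
    -- nonnegative initial datum
    (hupos0 : ∀ j, ∀ x ∈ Set.Icc (0:ℝ) 1, 0 ≤ u j 0 x) :
    ∀ j, ∀ t ∈ Set.Icc (0:ℝ) T, ∀ x ∈ Set.Icc (0:ℝ) 1, 0 ≤ u j t x :=
  stmt_7_general n m eI eT κ hκ T u ut ux uxx cx cxx hucont hcxcont hcxxcont hut hux huxx hpde
    hucontv hKu hupos0
end

section
/- Let α ≥ 0, let c : [0,1] → ℝ be twice continuously differentiable and u : [0,1] → ℝ continuous, with c'' = α·c − u on [0,1], c ≥ 0 and u ≥ 0 on [0,1]. Then c'(0) ≤ 2·∫₀¹ c(x) dx + ∫₀¹ u(x) dx. -/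
/-!
Since `c ≥ 0` and `α ≥ 0`, the equation gives `c'' ≥ -u`, so `c'(η) ≥ c'(0) - ∫₀¹ u` for every
`η ∈ [0,1]`. Integrating once more and using `c(0) ≥ 0` gives `c(x) ≥ (c'(0) - ∫₀¹ u) x`, and a
third integration over `[0,1]` gives `∫₀¹ c ≥ (c'(0) - ∫₀¹ u) / 2`.
-/

open MeasureTheory Set intervalIntegral

theorem integral_le_sub_of_hasDerivWithinAt_of_le {f f' φ : ℝ → ℝ} {a b : ℝ} {s : Set ℝ}
    (hab : a ≤ b) (hs : Icc a b ⊆ s) (hf : ∀ x ∈ Icc a b, HasDerivWithinAt f (f' x) s x)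
    (hφ : IntegrableOn φ (Icc a b)) (hφf : ∀ x ∈ Icc a b, φ x ≤ f' x) :
    ∫ x in a..b, φ x ≤ f b - f a := by
  refine integral_le_sub_of_hasDeriv_right_of_le hab
    (fun x hx => ((hf x hx).mono hs).continuousWithinAt) (fun x hx => ?_) hφ
    (fun x hx => hφf x (Ioo_subset_Icc_self hx))
  have hs_nhds : s ∈ nhds x := Filter.mem_of_superset (Icc_mem_nhds hx.1 hx.2) hs
  exact ((hf x (Ioo_subset_Icc_self hx)).hasDerivAt hs_nhds).hasDerivWithinAt

theorem sub_integral_le_of_neg_le_deriv {f f' u : ℝ → ℝ} {a b : ℝ}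
    (hf : ∀ x ∈ Icc a b, HasDerivWithinAt f (f' x) (Icc a b) x)
    (hu : IntegrableOn u (Icc a b)) (hu₀ : ∀ x ∈ Icc a b, 0 ≤ u x)
    (huf : ∀ x ∈ Icc a b, -u x ≤ f' x) {η : ℝ} (hη : η ∈ Icc a b) :
    f a - ∫ x in a..b, u x ≤ f η := by
  have hsub : Icc a η ⊆ Icc a b := Icc_subset_Icc_right hη.2
  have hderiv : ∫ x in a..η, -u x ≤ f η - f a :=
    integral_le_sub_of_hasDerivWithinAt_of_le hη.1 hsub (fun x hx => hf x (hsub hx))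
      (hu.mono_set hsub).neg (fun x hx => huf x (hsub hx))
  have htail : ∫ x in a..η, u x ≤ ∫ x in a..b, u x := by
    refine integral_mono_interval le_rfl hη.1 hη.2 ?_
      ((intervalIntegrable_iff_integrableOn_Icc_of_le (hη.1.trans hη.2)).2 hu)
    filter_upwards [ae_restrict_mem measurableSet_Ioc] with x hx
    exact hu₀ x (Ioc_subset_Icc_self hx)
  rw [intervalIntegral.integral_neg] at hderiv
  linarith

theorem mul_sub_le_sub_of_le_deriv {f f' : ℝ → ℝ} {a b m : ℝ}
    (hf : ∀ x ∈ Icc a b, HasDerivWithinAt f (f' x) (Icc a b) x) (hm : ∀ x ∈ Icc a b, m ≤ f' x)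
    {x : ℝ} (hx : x ∈ Icc a b) : m * (x - a) ≤ f x - f a := by
  have hsub : Icc a x ⊆ Icc a b := Icc_subset_Icc_right hx.2
  have h := integral_le_sub_of_hasDerivWithinAt_of_le hx.1 hsub (fun y hy => hf y (hsub hy))
    (integrableOn_const measure_Icc_lt_top.ne) (fun y hy => hm y (hsub hy))
  rwa [intervalIntegral.integral_const, smul_eq_mul, mul_comm] at h

theorem stmt_12_general (α : ℝ) (hα : 0 ≤ α) (c u c1 c2 : ℝ → ℝ)
    (hc1 : ∀ x ∈ Set.Icc (0:ℝ) 1, HasDerivWithinAt c (c1 x) (Set.Icc 0 1) x)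
    (hc2 : ∀ x ∈ Set.Icc (0:ℝ) 1, HasDerivWithinAt c1 (c2 x) (Set.Icc 0 1) x)
    (hucont : ContinuousOn u (Set.Icc 0 1))
    (heq : ∀ x ∈ Set.Icc (0:ℝ) 1, c2 x = α * c x - u x)
    (hcpos : ∀ x ∈ Set.Icc (0:ℝ) 1, 0 ≤ c x)
    (hupos : ∀ x ∈ Set.Icc (0:ℝ) 1, 0 ≤ u x) :
    c1 0 ≤ 2 * (∫ x in (0:ℝ)..1, c x) + ∫ x in (0:ℝ)..1, u x := by
  set m := c1 0 - ∫ x in (0:ℝ)..1, u x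
  have hc1_ge : ∀ x ∈ Icc (0:ℝ) 1, m ≤ c1 x :=
    fun x hx => sub_integral_le_of_neg_le_deriv hc2 hucont.integrableOn_Icc hupos
      (fun y hy => by rw [heq y hy]; linarith [mul_nonneg hα (hcpos y hy)]) hx
  have hc_ge : ∀ x ∈ Icc (0:ℝ) 1, m * x ≤ c x := fun x hx => by
    linarith [mul_sub_le_sub_of_le_deriv hc1 hc1_ge hx, hcpos 0 (left_mem_Icc.2 zero_le_one)]
  have hint : ∫ x in (0:ℝ)..1, m * x ≤ ∫ x in (0:ℝ)..1, c x :=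
    integral_mono_on zero_le_one ((continuous_const_mul m).intervalIntegrable 0 1)
      (ContinuousOn.intervalIntegrable_of_Icc zero_le_one fun x hx => (hc1 x hx).continuousWithinAt)
      hc_ge
  rw [intervalIntegral.integral_const_mul, integral_id] at hint
  norm_num at hint
  linarith

/-- **Edge-wise upper bound on `c'(0)`.**
Let `c : [0,1] → ℝ` be twice continuously differentiable (with `c1 = c'`, `c2 = c''`) and
`u : [0,1] → ℝ` continuous, with `c'' = α c − u`, `c ≥ 0`, `u ≥ 0` on `[0,1]`, `α ≥ 0`.
Then `c'(0) ≤ 2 ∫₀¹ c + ∫₀¹ u`. -/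
theorem stmt_12 (α : ℝ) (hα : 0 ≤ α) (c u c1 c2 : ℝ → ℝ)
    (hc1 : ∀ x ∈ Set.Icc (0:ℝ) 1, HasDerivWithinAt c (c1 x) (Set.Icc 0 1) x)
    (hc2 : ∀ x ∈ Set.Icc (0:ℝ) 1, HasDerivWithinAt c1 (c2 x) (Set.Icc 0 1) x)
    (hc2cont : ContinuousOn c2 (Set.Icc 0 1))
    (hucont : ContinuousOn u (Set.Icc 0 1))
    (heq : ∀ x ∈ Set.Icc (0:ℝ) 1, c2 x = α * c x - u x)
    (hcpos : ∀ x ∈ Set.Icc (0:ℝ) 1, 0 ≤ c x)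
    (hupos : ∀ x ∈ Set.Icc (0:ℝ) 1, 0 ≤ u x) :
    c1 0 ≤ 2 * (∫ x in (0:ℝ)..1, c x) + ∫ x in (0:ℝ)..1, u x :=
  stmt_12_general α hα c u c1 c2 hc1 hc2 hucont heq hcpos hupos
end

section
/- Let α > 0 and let w, z be functions on a finite weighted network such that each w j is twice continuously differentiable on [0,1], each z j is continuous on [0,1], −(w j)'' = z j − α·w j on [0,1] for every j, w is continuous at the vertices, and w satisfies the Kirchhoff condition at every vertex. Then for every edge j and every x ∈ [0,1], inf_{i, y∈[0,1]} z i(y) ≤ α·w j(x) ≤ sup_{i, y∈[0,1]} z i(y). -/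
/-!
Let `(j₀, x₀)` be a point where `w` attains its maximum over the whole network. If `x₀` is a
vertex, `w` can only decrease from that vertex into each incident edge, so all terms of the
Kirchhoff sum have the same sign and all of them, in particular `w_{j₀}'(x₀)`, vanish; at an interior point
this is Fermat's theorem. A critical maximum has `w_{j₀}''(x₀) ≤ 0`, also at an endpoint of
`[0, 1]`, so `α w ≤ α w_{j₀}(x₀) = z_{j₀}(x₀) + w_{j₀}''(x₀) ≤ z_{j₀}(x₀)`. The lower bound is the
same argument for `-w`, `-z`.
-/

open Finset Set Filter Topology

theorem IsMaxOn.mul_sub_nonpos_of_hasDerivWithinAt {f : ℝ → ℝ} {f' x y : ℝ} {s : Set ℝ}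
    (h : IsMaxOn f s x) (hf : HasDerivWithinAt f f' s x) (hy : segment ℝ x y ⊆ s) :
    (y - x) * f' ≤ 0 := by
  simpa using h.localize.hasFDerivWithinAt_nonpos hf.hasFDerivWithinAt
    (sub_mem_posTangentConeAt_of_segment_subset hy)

theorem eventually_nhdsGT_pos_of_hasDerivWithinAt {g : ℝ → ℝ} {g' x₀ : ℝ}
    (hg : HasDerivWithinAt g g' (Ioi x₀) x₀) (hg' : 0 < g') (h₀ : g x₀ = 0) :
    ∀ᶠ x in 𝓝[>] x₀, 0 < g x := by
  rw [hasDerivWithinAt_iff_tendsto_slope, sdiff_singleton_eq_self Set.self_notMem_Ioi] at hg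
  filter_upwards [hg.eventually (eventually_gt_nhds hg'), self_mem_nhdsWithin] with x hslope hx
  exact pos_of_slope_pos hx hslope h₀

theorem eventually_nhdsLT_neg_of_hasDerivWithinAt {g : ℝ → ℝ} {g' x₀ : ℝ}
    (hg : HasDerivWithinAt g g' (Iio x₀) x₀) (hg' : 0 < g') (h₀ : g x₀ = 0) :
    ∀ᶠ x in 𝓝[<] x₀, g x < 0 := by
  rw [hasDerivWithinAt_iff_tendsto_slope, sdiff_singleton_eq_self Set.self_notMem_Iio] at hg
  filter_upwards [hg.eventually (eventually_gt_nhds hg'), self_mem_nhdsWithin] with x hslope hx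
  exact neg_of_slope_pos hx hslope h₀

theorem IsMaxOn.second_deriv_nonpos {f f₁ : ℝ → ℝ} {f₂ a b x₀ : ℝ} (hab : a < b)
    (hf : ∀ x ∈ Icc a b, HasDerivWithinAt f (f₁ x) (Icc a b) x)
    (hf₁ : HasDerivWithinAt f₁ f₂ (Icc a b) x₀) (hx₀ : x₀ ∈ Icc a b)
    (hmax : IsMaxOn f (Icc a b) x₀) (hcrit : f₁ x₀ = 0) : f₂ ≤ 0 := by
  by_contra! hpos
  -- near `x₀`, `f₁` has the sign of `x - x₀`, so `f` rises on some side of `x₀` within `[a, b]`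
  have hfc : ContinuousOn f (Icc a b) := fun x hx => (hf x hx).continuousWithinAt
  rcases hx₀.2.lt_or_eq with hlt | rfl
  · have hnhds : ∀ᶠ x in 𝓝[>] x₀, x ∈ Icc a b := Icc_mem_nhdsGT_of_mem ⟨hx₀.1, hlt⟩
    have hright : ∀ᶠ x in 𝓝[>] x₀, x ∈ Icc a b ∧ 0 < f₁ x := hnhds.and
      (eventually_nhdsGT_pos_of_hasDerivWithinAt (hf₁.mono_of_mem_nhdsWithin hnhds) hpos hcrit)
    obtain ⟨c, hc, hsub⟩ := mem_nhdsGT_iff_exists_Ioc_subset.1 hright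
    have hcI : c ∈ Icc a b := (hsub ⟨hc, le_rfl⟩).1
    have hmono : StrictMonoOn f (Icc x₀ c) := by
      refine strictMonoOn_of_hasDerivWithinAt_pos (f' := f₁) (convex_Icc _ _)
        (hfc.mono (Icc_subset_Icc hx₀.1 hcI.2)) (fun x hx => ?_) (fun x hx => ?_)
      all_goals rw [interior_Icc] at hx
      · exact (hf x (hsub ⟨hx.1, hx.2.le⟩).1).mono (interior_subset.trans (Icc_subset_Icc hx₀.1 hcI.2))
      · exact (hsub ⟨hx.1, hx.2.le⟩).2
    exact (hmono (left_mem_Icc.2 hc.le) (right_mem_Icc.2 hc.le) hc).not_ge (hmax hcI)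
  · have hnhds : ∀ᶠ x in 𝓝[<] x₀, x ∈ Icc a x₀ := Icc_mem_nhdsLT_of_mem ⟨hab, le_rfl⟩
    have hleft : ∀ᶠ x in 𝓝[<] x₀, x ∈ Icc a x₀ ∧ f₁ x < 0 := hnhds.and
      (eventually_nhdsLT_neg_of_hasDerivWithinAt (hf₁.mono_of_mem_nhdsWithin hnhds) hpos hcrit)
    obtain ⟨c, hc, hsub⟩ := mem_nhdsLT_iff_exists_Ico_subset.1 hleft
    have hcI : c ∈ Icc a x₀ := (hsub ⟨le_rfl, hc⟩).1
    have hanti : StrictAntiOn f (Icc c x₀) := by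
      refine strictAntiOn_of_hasDerivWithinAt_neg (f' := f₁) (convex_Icc _ _)
        (hfc.mono (Icc_subset_Icc hcI.1 le_rfl)) (fun x hx => ?_) (fun x hx => ?_)
      all_goals rw [interior_Icc] at hx
      · exact (hf x (hsub ⟨hx.1.le, hx.2⟩).1).mono (interior_subset.trans (Icc_subset_Icc hcI.1 le_rfl))
      · exact (hsub ⟨hx.1.le, hx.2⟩).2
    exact (hanti (left_mem_Icc.2 hc.le) (right_mem_Icc.2 hc.le) hc).not_ge (hmax hcI)

theorem IsCompact.exists_forall_le_family {ι X : Type*} [Finite ι] [Nonempty ι]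
    [TopologicalSpace X] {K : Set X} (hK : IsCompact K) (hne : K.Nonempty) {f : ι → X → ℝ}
    (hf : ∀ i, ContinuousOn (f i) K) : ∃ i₀, ∃ x₀ ∈ K, ∀ i, ∀ x ∈ K, f i x ≤ f i₀ x₀ := by
  choose x hx hmax using fun i => hK.exists_isMaxOn hne (hf i)
  obtain ⟨i₀, hi₀⟩ := Finite.exists_max fun i => f i (x i)
  exact ⟨i₀, x i₀, hx i₀, fun i y hy => (hmax i hy).trans (hi₀ i)⟩

theorem eq_zero_of_sum_sub_sum_eq_zero {ι M : Type*} [AddCommGroup M] [PartialOrder M]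
    [IsOrderedAddMonoid M] {s t : Finset ι} {f g : ι → M}
    (hf : ∀ i ∈ s, 0 ≤ f i) (hg : ∀ i ∈ t, g i ≤ 0) (h : ∑ i ∈ s, f i - ∑ i ∈ t, g i = 0) :
    (∀ i ∈ s, f i = 0) ∧ ∀ i ∈ t, g i = 0 := by
  have hS := sum_nonneg hf
  have hT := sum_nonpos hg
  rw [sub_eq_zero] at h
  exact ⟨(sum_eq_zero_iff_of_nonneg hf).1 (le_antisymm (h ▸ hT) hS),
    (sum_eq_zero_iff_of_nonpos hg).1 (le_antisymm hT (h ▸ hS))⟩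

namespace Network

variable {E V : Type*} [Fintype E] [DecidableEq V] {eI eT : E → V} {κ : E → ℝ}
  {w w1 : E → ℝ → ℝ} {b : V → ℝ}

theorem deriv_eq_zero_at_vertex_of_isMax (hκ : ∀ j, 0 < κ j)
    (hw1 : ∀ j, ∀ x ∈ Icc (0:ℝ) 1, HasDerivWithinAt (w j) (w1 j x) (Icc 0 1) x)
    (hwb : ∀ j, w j 0 = b (eI j) ∧ w j 1 = b (eT j)) {v : V}
    (hKv : ∑ j ∈ univ.filter (fun j => eT j = v), κ j * w1 j 1
        - ∑ j ∈ univ.filter (fun j => eI j = v), κ j * w1 j 0 = 0)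
    (hmax : ∀ j, ∀ x ∈ Icc (0:ℝ) 1, w j x ≤ b v) :
    (∀ j, eT j = v → w1 j 1 = 0) ∧ ∀ j, eI j = v → w1 j 0 = 0 := by
  have hseg₁₀ : segment ℝ (1:ℝ) 0 ⊆ Icc 0 1 := (convex_Icc 0 1).segment_subset (by simp) (by simp)
  have hseg₀₁ : segment ℝ (0:ℝ) 1 ⊆ Icc 0 1 := (convex_Icc 0 1).segment_subset (by simp) (by simp)
  have hin : ∀ j ∈ univ.filter (fun j => eT j = v), 0 ≤ κ j * w1 j 1 := by
    intro j hj
    have hmax1 : IsMaxOn (w j) (Icc 0 1) 1 := fun x hx => by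
      simpa [(hwb j).2, (mem_filter.1 hj).2] using hmax j x hx
    have := hmax1.mul_sub_nonpos_of_hasDerivWithinAt (hw1 j 1 (by simp)) hseg₁₀
    exact mul_nonneg (hκ j).le (by linarith)
  have hout : ∀ j ∈ univ.filter (fun j => eI j = v), κ j * w1 j 0 ≤ 0 := by
    intro j hj
    have hmax0 : IsMaxOn (w j) (Icc 0 1) 0 := fun x hx => by
      simpa [(hwb j).1, (mem_filter.1 hj).2] using hmax j x hx
    have := hmax0.mul_sub_nonpos_of_hasDerivWithinAt (hw1 j 0 (by simp)) hseg₀₁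
    exact mul_nonpos_of_nonneg_of_nonpos (hκ j).le (by linarith)
  obtain ⟨hT, hI⟩ := eq_zero_of_sum_sub_sum_eq_zero hin hout hKv
  exact ⟨fun j hj => (mul_eq_zero.1 (hT j (by simp [hj]))).resolve_left (hκ j).ne',
    fun j hj => (mul_eq_zero.1 (hI j (by simp [hj]))).resolve_left (hκ j).ne'⟩

theorem deriv_eq_zero_of_isMax (hκ : ∀ j, 0 < κ j)
    (hw1 : ∀ j, ∀ x ∈ Icc (0:ℝ) 1, HasDerivWithinAt (w j) (w1 j x) (Icc 0 1) x)
    (hwb : ∀ j, w j 0 = b (eI j) ∧ w j 1 = b (eT j))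
    (hKw : ∀ v : V,
      ∑ j ∈ univ.filter (fun j => eT j = v), κ j * w1 j 1
        - ∑ j ∈ univ.filter (fun j => eI j = v), κ j * w1 j 0 = 0)
    {j₀ : E} {x₀ : ℝ} (hx₀ : x₀ ∈ Icc (0:ℝ) 1) (hmax : ∀ j, ∀ x ∈ Icc (0:ℝ) 1, w j x ≤ w j₀ x₀) :
    w1 j₀ x₀ = 0 := by
  rcases hx₀.1.eq_or_lt with rfl | h0
  · rw [(hwb j₀).1] at hmax
    exact (deriv_eq_zero_at_vertex_of_isMax hκ hw1 hwb (hKw _) hmax).2 j₀ rfl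
  rcases hx₀.2.eq_or_lt with rfl | h1
  · rw [(hwb j₀).2] at hmax
    exact (deriv_eq_zero_at_vertex_of_isMax hκ hw1 hwb (hKw _) hmax).1 j₀ rfl
  have hnhds : Icc (0:ℝ) 1 ∈ 𝓝 x₀ := Icc_mem_nhds h0 h1
  exact IsLocalMax.hasDerivAt_eq_zero (mem_of_superset hnhds (hmax j₀))
    ((hw1 j₀ x₀ hx₀).hasDerivAt hnhds)

theorem exists_forall_mul_le [Nonempty E] (hκ : ∀ j, 0 < κ j) {α : ℝ} (hα : 0 ≤ α)
    {z w2 : E → ℝ → ℝ}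
    (hw1 : ∀ j, ∀ x ∈ Icc (0:ℝ) 1, HasDerivWithinAt (w j) (w1 j x) (Icc 0 1) x)
    (hw2 : ∀ j, ∀ x ∈ Icc (0:ℝ) 1, HasDerivWithinAt (w1 j) (w2 j x) (Icc 0 1) x)
    (heq : ∀ j, ∀ x ∈ Icc (0:ℝ) 1, -(w2 j x) = z j x - α * w j x)
    (hwb : ∀ j, w j 0 = b (eI j) ∧ w j 1 = b (eT j))
    (hKw : ∀ v : V,
      ∑ j ∈ univ.filter (fun j => eT j = v), κ j * w1 j 1
        - ∑ j ∈ univ.filter (fun j => eI j = v), κ j * w1 j 0 = 0) :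
    ∃ j₀, ∃ x₀ ∈ Icc (0:ℝ) 1, ∀ j, ∀ x ∈ Icc (0:ℝ) 1, α * w j x ≤ z j₀ x₀ := by
  obtain ⟨j₀, x₀, hx₀, hmax⟩ := isCompact_Icc.exists_forall_le_family
    (nonempty_Icc.2 zero_le_one) fun j x hx => (hw1 j x hx).continuousWithinAt
  have hcrit : w1 j₀ x₀ = 0 := deriv_eq_zero_of_isMax hκ hw1 hwb hKw hx₀ hmax
  have hw2_nonpos : w2 j₀ x₀ ≤ 0 :=
    IsMaxOn.second_deriv_nonpos one_pos (hw1 j₀) (hw2 j₀ x₀ hx₀) hx₀ (hmax j₀) hcrit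
  refine ⟨j₀, x₀, hx₀, fun j x hx => ?_⟩
  calc α * w j x ≤ α * w j₀ x₀ := mul_le_mul_of_nonneg_left (hmax j x hx) hα
    _ ≤ z j₀ x₀ := by linarith [heq j₀ x₀ hx₀]

theorem exists_forall_le_mul [Nonempty E] (hκ : ∀ j, 0 < κ j) {α : ℝ} (hα : 0 ≤ α)
    {z w2 : E → ℝ → ℝ}
    (hw1 : ∀ j, ∀ x ∈ Icc (0:ℝ) 1, HasDerivWithinAt (w j) (w1 j x) (Icc 0 1) x)
    (hw2 : ∀ j, ∀ x ∈ Icc (0:ℝ) 1, HasDerivWithinAt (w1 j) (w2 j x) (Icc 0 1) x)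
    (heq : ∀ j, ∀ x ∈ Icc (0:ℝ) 1, -(w2 j x) = z j x - α * w j x)
    (hwb : ∀ j, w j 0 = b (eI j) ∧ w j 1 = b (eT j))
    (hKw : ∀ v : V,
      ∑ j ∈ univ.filter (fun j => eT j = v), κ j * w1 j 1
        - ∑ j ∈ univ.filter (fun j => eI j = v), κ j * w1 j 0 = 0) :
    ∃ j₀, ∃ x₀ ∈ Icc (0:ℝ) 1, ∀ j, ∀ x ∈ Icc (0:ℝ) 1, z j₀ x₀ ≤ α * w j x := by
  obtain ⟨j₀, x₀, hx₀, h⟩ := exists_forall_mul_le (w := -w) (w1 := -w1) (w2 := -w2) (z := -z)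
    (b := -b) (eI := eI) (eT := eT) hκ hα (fun j x hx => (hw1 j x hx).neg) (fun j x hx => (hw2 j x hx).neg)
    (fun j x hx => by simp only [Pi.neg_apply]; linarith [heq j x hx])
    (fun j => by simp [hwb j])
    (fun v => by simp only [Pi.neg_apply, mul_neg, sum_neg_distrib]; linarith [hKw v])
  exact ⟨j₀, x₀, hx₀, fun j x hx => by simpa using h j x hx⟩

end Network

theorem IsCompact.le_iSup_iSup {ι X : Type*} [Finite ι] [TopologicalSpace X] {K : Set X}
    (hK : IsCompact K) {z : ι → X → ℝ} (hz : ∀ i, ContinuousOn (z i) K) (i : ι) {y : X}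
    (hy : y ∈ K) : z i y ≤ ⨆ i, ⨆ y : K, z i y := by
  have hbdd : BddAbove (range fun y : K => z i y) := by
    rw [← image_eq_range]; exact hK.bddAbove_image (hz i)
  exact (le_ciSup hbdd ⟨y, hy⟩).trans
    (le_ciSup (f := fun i => ⨆ y : K, z i y) (finite_range _).bddAbove i)

theorem IsCompact.iInf_iInf_le {ι X : Type*} [Finite ι] [TopologicalSpace X] {K : Set X}
    (hK : IsCompact K) {z : ι → X → ℝ} (hz : ∀ i, ContinuousOn (z i) K) (i : ι) {y : X}
    (hy : y ∈ K) : ⨅ i, ⨅ y : K, z i y ≤ z i y := by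
  have hbdd : BddBelow (range fun y : K => z i y) := by
    rw [← image_eq_range]; exact hK.bddBelow_image (hz i)
  exact (ciInf_le (f := fun i => ⨅ y : K, z i y) (finite_range _).bddBelow i).trans
    (ciInf_le hbdd ⟨y, hy⟩)

theorem stmt_14_general (n m : ℕ) (hm : 1 ≤ m) (eI eT : Fin m → Fin n)
    (κ : Fin m → ℝ) (hκ : ∀ j, 0 < κ j) (α : ℝ) (hα : 0 < α)
    (w z w1 w2 : Fin m → ℝ → ℝ)
    -- w is twice continuously differentiable on [0,1], with w1 = w', w2 = w''
    (hw1 : ∀ j, ∀ x ∈ Set.Icc (0:ℝ) 1, HasDerivWithinAt (w j) (w1 j x) (Set.Icc 0 1) x)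
    (hw2 : ∀ j, ∀ x ∈ Set.Icc (0:ℝ) 1, HasDerivWithinAt (w1 j) (w2 j x) (Set.Icc 0 1) x)
    -- z is continuous on [0,1]
    (hzcont : ∀ j, ContinuousOn (z j) (Set.Icc 0 1))
    -- the elliptic equation −w'' = z − α w
    (heq : ∀ j, ∀ x ∈ Set.Icc (0:ℝ) 1, -(w2 j x) = z j x - α * w j x)
    -- w is continuous at the vertices
    (b : Fin n → ℝ) (hwb : ∀ j, w j 0 = b (eI j) ∧ w j 1 = b (eT j))
    -- Kirchhoff condition for w at every vertex
    (hKw : ∀ v : Fin n,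
      ∑ j ∈ univ.filter (fun j => eT j = v), κ j * w1 j 1
        - ∑ j ∈ univ.filter (fun j => eI j = v), κ j * w1 j 0 = 0) :
    ∀ j, ∀ x ∈ Set.Icc (0:ℝ) 1,
      (⨅ i, ⨅ y : Set.Icc (0:ℝ) 1, z i (y : ℝ)) ≤ α * w j x ∧
      α * w j x ≤ ⨆ i, ⨆ y : Set.Icc (0:ℝ) 1, z i (y : ℝ) := by
  have : Nonempty (Fin m) := ⟨⟨0, hm⟩⟩
  obtain ⟨i, y, hy, hle⟩ := Network.exists_forall_mul_le hκ hα.le hw1 hw2 heq hwb hKw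
  obtain ⟨i', y', hy', hge⟩ := Network.exists_forall_le_mul hκ hα.le hw1 hw2 heq hwb hKw
  intro j x hx
  exact ⟨(isCompact_Icc.iInf_iInf_le hzcont i' hy').trans (hge j x hx),
    (hle j x hx).trans (isCompact_Icc.le_iSup_iSup hzcont i hy)⟩

/-- **Elliptic maximum principle on a network.**
On a finite weighted network, if `−w_j'' = z_j − α w_j` on each edge (with `w1 = w'`,
`w2 = w''`, `z` continuous edge by edge), `w` is continuous at the vertices and satisfies
the Kirchhoff condition at every vertex, then for every edge `j` and every `x ∈ [0,1]`,
`inf_{i,y} z_i(y) ≤ α w_j(x) ≤ sup_{i,y} z_i(y)`. -/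
theorem stmt_14 (n m : ℕ) (hm : 1 ≤ m) (eI eT : Fin m → Fin n) (hIT : ∀ j, eI j ≠ eT j)
    (κ : Fin m → ℝ) (hκ : ∀ j, 0 < κ j) (α : ℝ) (hα : 0 < α)
    (w z w1 w2 : Fin m → ℝ → ℝ)
    -- w is twice continuously differentiable on [0,1], with w1 = w', w2 = w''
    (hw1 : ∀ j, ∀ x ∈ Set.Icc (0:ℝ) 1, HasDerivWithinAt (w j) (w1 j x) (Set.Icc 0 1) x)
    (hw2 : ∀ j, ∀ x ∈ Set.Icc (0:ℝ) 1, HasDerivWithinAt (w1 j) (w2 j x) (Set.Icc 0 1) x)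
    (hw2cont : ∀ j, ContinuousOn (w2 j) (Set.Icc 0 1))
    -- z is continuous on [0,1]
    (hzcont : ∀ j, ContinuousOn (z j) (Set.Icc 0 1))
    -- the elliptic equation −w'' = z − α w
    (heq : ∀ j, ∀ x ∈ Set.Icc (0:ℝ) 1, -(w2 j x) = z j x - α * w j x)
    -- w is continuous at the vertices
    (b : Fin n → ℝ) (hwb : ∀ j, w j 0 = b (eI j) ∧ w j 1 = b (eT j))
    -- Kirchhoff condition for w at every vertex
    (hKw : ∀ v : Fin n,
      ∑ j ∈ univ.filter (fun j => eT j = v), κ j * w1 j 1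
        - ∑ j ∈ univ.filter (fun j => eI j = v), κ j * w1 j 0 = 0) :
    ∀ j, ∀ x ∈ Set.Icc (0:ℝ) 1,
      (⨅ i, ⨅ y : Set.Icc (0:ℝ) 1, z i (y : ℝ)) ≤ α * w j x ∧
      α * w j x ≤ ⨆ i, ⨆ y : Set.Icc (0:ℝ) 1, z i (y : ℝ) :=
  stmt_14_general n m hm eI eT κ hκ α hα w z w1 w2 hw1 hw2 hzcont heq b hwb hKw
end

section
/- Let α > 0 and let z be a function on a finite weighted network such that each z j is continuous on [0,1] and z is continuous at the vertices. Then there exists exactly one function w on the network such that each w j is twice continuously differentiable on [0,1], w is continuous at the vertices, w satisfies the Kirchhoff condition at every vertex, and −(w j)'' = z j − α·w j on [0,1] for every edge j. -/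
open Finset

/-- A function `w` on the network (with first and second spatial derivatives `w1`, `w2`
on each edge) is a solution of the elliptic problem `−w'' = z − α w` with continuity at
the vertices and Kirchhoff conditions. -/
def IsNetworkSolution (n m : ℕ) (eI eT : Fin m → Fin n) (κ : Fin m → ℝ) (α : ℝ)
    (z w w1 w2 : Fin m → ℝ → ℝ) : Prop :=
  -- w is twice continuously differentiable on [0,1], with w1 = w', w2 = w''
  (∀ j, ∀ x ∈ Set.Icc (0:ℝ) 1, HasDerivWithinAt (w j) (w1 j x) (Set.Icc 0 1) x) ∧
  (∀ j, ∀ x ∈ Set.Icc (0:ℝ) 1, HasDerivWithinAt (w1 j) (w2 j x) (Set.Icc 0 1) x) ∧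
  (∀ j, ContinuousOn (w2 j) (Set.Icc 0 1)) ∧
  -- w is continuous at the vertices
  (∃ b : Fin n → ℝ, ∀ j, w j 0 = b (eI j) ∧ w j 1 = b (eT j)) ∧
  -- Kirchhoff condition at every vertex
  (∀ v : Fin n,
    ∑ j ∈ univ.filter (fun j => eT j = v), κ j * w1 j 1
      - ∑ j ∈ univ.filter (fun j => eI j = v), κ j * w1 j 0 = 0) ∧
  -- the elliptic equation −w'' = z − α w on every edge
  (∀ j, ∀ x ∈ Set.Icc (0:ℝ) 1, -(w2 j x) = z j x - α * w j x)



/-!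
Uniqueness is an energy argument: the difference `u` of two solutions satisfies `u'' = α u`, so
`(u u')' = u'² + α u² ≥ 0` on every edge, while continuity at the vertices together with the
Kirchhoff conditions gives `∑ⱼ κⱼ [uⱼ uⱼ']₀¹ = 0`. Hence each `uⱼ uⱼ'` is constant and `u = 0`.

For existence let `β = √α`. On an edge, the solutions with end values `a`, `c` are
`(a sinh (β (1 - x)) + c sinh (β x)) / sinh β` plus a particular solution vanishing at both ends,
obtained from the Duhamel integral. Prescribing the vertex values `b` turns the Kirchhoff
conditions into a square linear system in `b`, whose matrix is injective by uniqueness for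
`z = 0` (once isolated vertices are pinned down), hence surjective.
-/

open Real Set

section Edge

variable {β : ℝ}

noncomputable def sinhInterp (β a c x : ℝ) : ℝ :=
  (a * sinh (β * (1 - x)) + c * sinh (β * x)) / sinh β

noncomputable def sinhInterpDeriv (β a c x : ℝ) : ℝ :=
  β * (c * cosh (β * x) - a * cosh (β * (1 - x))) / sinh β

theorem hasDerivAt_sinhInterp (β a c x : ℝ) :
    HasDerivAt (sinhInterp β a c) (sinhInterpDeriv β a c x) x := by
  have h0 : HasDerivAt (fun x => β * (1 - x)) (β * (0 - 1)) x :=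
    ((hasDerivAt_const x 1).sub (hasDerivAt_id x)).const_mul β
  have h1 : HasDerivAt (fun x => β * x) (β * 1) x := (hasDerivAt_id x).const_mul β
  refine (((h0.sinh.const_mul a).add (h1.sinh.const_mul c)).div_const (sinh β)).congr_deriv ?_
  rw [sinhInterpDeriv]
  ring

theorem hasDerivAt_sinhInterpDeriv (β a c x : ℝ) :
    HasDerivAt (sinhInterpDeriv β a c) (β ^ 2 * sinhInterp β a c x) x := by
  have h0 : HasDerivAt (fun x => β * (1 - x)) (β * (0 - 1)) x :=
    ((hasDerivAt_const x 1).sub (hasDerivAt_id x)).const_mul β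
  have h1 : HasDerivAt (fun x => β * x) (β * 1) x := (hasDerivAt_id x).const_mul β
  refine ((((h1.cosh.const_mul c).sub (h0.cosh.const_mul a)).const_mul β).div_const
    (sinh β)).congr_deriv ?_
  rw [sinhInterp]
  ring

theorem sinhInterp_zero (hβ : sinh β ≠ 0) (a c : ℝ) : sinhInterp β a c 0 = a := by
  simp [sinhInterp, hβ]

theorem sinhInterp_one (hβ : sinh β ≠ 0) (a c : ℝ) : sinhInterp β a c 1 = c := by
  simp [sinhInterp, hβ]

theorem sinhInterpDeriv_add (β a c a' c' x : ℝ) :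
    sinhInterpDeriv β (a + a') (c + c') x
      = sinhInterpDeriv β a c x + sinhInterpDeriv β a' c' x := by
  simp only [sinhInterpDeriv]
  ring

theorem sinhInterpDeriv_mul (β r a c x : ℝ) :
    sinhInterpDeriv β (r * a) (r * c) x = r * sinhInterpDeriv β a c x := by
  simp only [sinhInterpDeriv]
  ring

/-- This is `(1/β) ∫₀ˣ sinh (β (t - x)) f t dt`, expanded so that `x` leaves the integrands. -/
noncomputable def duhamel (β : ℝ) (f : ℝ → ℝ) (x : ℝ) : ℝ :=
  (cosh (β * x) * (∫ t in 0..x, sinh (β * t) * f t)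
    - sinh (β * x) * ∫ t in 0..x, cosh (β * t) * f t) / β

noncomputable def duhamelDeriv (β : ℝ) (f : ℝ → ℝ) (x : ℝ) : ℝ :=
  sinh (β * x) * (∫ t in 0..x, sinh (β * t) * f t) - cosh (β * x) * ∫ t in 0..x, cosh (β * t) * f t

theorem hasDerivAt_integral_of_continuous {g : ℝ → ℝ} (hg : Continuous g) (x : ℝ) :
    HasDerivAt (fun u => ∫ t in 0..u, g t) (g x) x :=
  intervalIntegral.integral_hasDerivAt_right (hg.intervalIntegrable 0 x)
    hg.stronglyMeasurable.stronglyMeasurableAtFilter hg.continuousAt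

theorem hasDerivAt_duhamel (hβ : β ≠ 0) {f : ℝ → ℝ} (hf : Continuous f) (x : ℝ) :
    HasDerivAt (duhamel β f) (duhamelDeriv β f x) x := by
  have h1 : HasDerivAt (fun x => β * x) (β * 1) x := (hasDerivAt_id x).const_mul β
  have hS := hasDerivAt_integral_of_continuous
    (by fun_prop : Continuous fun t => sinh (β * t) * f t) x
  have hC := hasDerivAt_integral_of_continuous
    (by fun_prop : Continuous fun t => cosh (β * t) * f t) x
  refine (((h1.cosh.mul hS).sub (h1.sinh.mul hC)).div_const β).congr_deriv ?_
  rw [duhamelDeriv]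
  field_simp
  ring

theorem hasDerivAt_duhamelDeriv (hβ : β ≠ 0) {f : ℝ → ℝ} (hf : Continuous f) (x : ℝ) :
    HasDerivAt (duhamelDeriv β f) (β ^ 2 * duhamel β f x - f x) x := by
  have h1 : HasDerivAt (fun x => β * x) (β * 1) x := (hasDerivAt_id x).const_mul β
  have hS := hasDerivAt_integral_of_continuous
    (by fun_prop : Continuous fun t => sinh (β * t) * f t) x
  have hC := hasDerivAt_integral_of_continuous
    (by fun_prop : Continuous fun t => cosh (β * t) * f t) x
  refine ((h1.sinh.mul hS).sub (h1.cosh.mul hC)).congr_deriv ?_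
  rw [duhamel, pow_two, mul_assoc β β, mul_div_cancel₀ _ hβ]
  linear_combination -f x * cosh_sq_sub_sinh_sq (β * x)

theorem duhamel_zero (β : ℝ) (f : ℝ → ℝ) : duhamel β f 0 = 0 := by
  simp [duhamel]

end Edge

section Energy

variable {D : Set ℝ} {α : ℝ} {u u1 : ℝ → ℝ}

theorem HasDerivWithinAt.mul_deriv_of_second_deriv {x : ℝ} (hu : HasDerivWithinAt u (u1 x) D x)
    (hu1 : HasDerivWithinAt u1 (α * u x) D x) :
    HasDerivWithinAt (fun y => u y * u1 y) (u1 x ^ 2 + α * u x ^ 2) D x :=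
  (hu.mul hu1).congr_deriv (by ring)

theorem monotoneOn_mul_deriv (hD : Convex ℝ D) (hα : 0 ≤ α)
    (hu : ∀ x ∈ D, HasDerivWithinAt u (u1 x) D x)
    (hu1 : ∀ x ∈ D, HasDerivWithinAt u1 (α * u x) D x) :
    MonotoneOn (fun x => u x * u1 x) D := by
  have hg x (hx : x ∈ D) := (hu x hx).mul_deriv_of_second_deriv (hu1 x hx)
  refine monotoneOn_of_hasDerivWithinAt_nonneg hD (fun x hx => (hg x hx).continuousWithinAt)
    (fun x hx => (hg x (interior_subset hx)).mono interior_subset) (fun x _ => by positivity)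

theorem eqOn_zero_of_mul_deriv_eq {a b : ℝ} (hab : a < b) (hα : 0 < α)
    (hu : ∀ x ∈ Icc a b, HasDerivWithinAt u (u1 x) (Icc a b) x)
    (hu1 : ∀ x ∈ Icc a b, HasDerivWithinAt u1 (α * u x) (Icc a b) x)
    (hend : u b * u1 b = u a * u1 a) : EqOn u 0 (Icc a b) := by
  have hmono := monotoneOn_mul_deriv (convex_Icc a b) hα.le hu hu1
  have hconst : EqOn (fun x => u x * u1 x) (fun _ => u a * u1 a) (Icc a b) := fun x hx =>
    le_antisymm (hend ▸ hmono hx (right_mem_Icc.2 hab.le) hx.2)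
      (hmono (left_mem_Icc.2 hab.le) hx hx.1)
  intro x hx
  have hzero : u1 x ^ 2 + α * u x ^ 2 = 0 :=
    (uniqueDiffOn_Icc hab x hx).eq_deriv _ ((hu x hx).mul_deriv_of_second_deriv (hu1 x hx))
      ((hasDerivWithinAt_const x _ _).congr hconst (hconst hx))
  have : u x ^ 2 = 0 := by nlinarith [sq_nonneg (u1 x), sq_nonneg (u x)]
  exact pow_eq_zero_iff two_ne_zero |>.mp this

end Energy

theorem ContinuousOn.exists_continuous_eqOn_Icc {f : ℝ → ℝ} {a b : ℝ} (hab : a ≤ b)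
    (hf : ContinuousOn f (Icc a b)) : ∃ g : ℝ → ℝ, Continuous g ∧ EqOn g f (Icc a b) :=
  ⟨IccExtend hab ((Icc a b).domRestrict f),
    (continuousOn_iff_continuous_domRestrict.1 hf).Icc_extend',
    fun _ hx => IccExtend_of_mem _ _ hx⟩

theorem Finset.sum_mul_sum_fiber {ι κ R : Type*} [Fintype ι] [Fintype κ] [DecidableEq κ]
    [CommSemiring R] (g : ι → κ) (c : κ → R) (F : ι → R) :
    ∑ v, c v * ∑ j with g j = v, F j = ∑ j, c (g j) * F j := by
  rw [← sum_fiberwise univ g fun j => c (g j) * F j]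
  refine sum_congr rfl fun v _ => ?_
  rw [mul_sum]
  exact sum_congr rfl fun j hj => by rw [(mem_filter.1 hj).2]

section Network

variable {n m : ℕ} (eI eT : Fin m → Fin n) (κ : Fin m → ℝ)

noncomputable def kirchhoffDefect : (Fin m → ℝ → ℝ) →ₗ[ℝ] Fin n → ℝ where
  toFun w1 v := ∑ j with eT j = v, κ j * w1 j 1 - ∑ j with eI j = v, κ j * w1 j 0
  map_add' w w' := by
    ext v
    simp only [Pi.add_apply, mul_add, sum_add_distrib]
    ring
  map_smul' r w := by
    ext v
    simp only [Pi.smul_apply, smul_eq_mul, RingHom.id_apply, mul_left_comm _ r, ← mul_sum]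
    ring

theorem kirchhoffDefect_apply (w1 : Fin m → ℝ → ℝ) (v : Fin n) :
    kirchhoffDefect eI eT κ w1 v
      = ∑ j with eT j = v, κ j * w1 j 1 - ∑ j with eI j = v, κ j * w1 j 0 :=
  rfl

theorem kirchhoffDefect_of_isolated {v : Fin n} (hv : ¬∃ j, eI j = v ∨ eT j = v)
    (w1 : Fin m → ℝ → ℝ) : kirchhoffDefect eI eT κ w1 v = 0 := by
  rw [kirchhoffDefect_apply, filter_false_of_mem fun j _ h => hv ⟨j, .inr h⟩,
    filter_false_of_mem fun j _ h => hv ⟨j, .inl h⟩, sum_empty, sum_empty, sub_zero]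

theorem sum_mul_kirchhoffDefect (c : Fin n → ℝ) (w1 : Fin m → ℝ → ℝ) :
    ∑ v, c v * kirchhoffDefect eI eT κ w1 v
      = ∑ j, κ j * (c (eT j) * w1 j 1 - c (eI j) * w1 j 0) := by
  simp only [kirchhoffDefect_apply, mul_sub, sum_sub_distrib, sum_mul_sum_fiber]
  congr 1 <;> exact sum_congr rfl fun j _ => by ring

end Network

namespace IsNetworkSolution

variable {n m : ℕ} {eI eT : Fin m → Fin n} {κ : Fin m → ℝ} {α : ℝ} {z w w1 w2 : Fin m → ℝ → ℝ}

theorem congr_source {z' : Fin m → ℝ → ℝ} (h : IsNetworkSolution n m eI eT κ α z w w1 w2)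
    (hz : ∀ j, EqOn (z j) (z' j) (Icc 0 1)) : IsNetworkSolution n m eI eT κ α z' w w1 w2 := by
  obtain ⟨hw, hw1, hw2c, hb, hK, hw2⟩ := h
  exact ⟨hw, hw1, hw2c, hb, hK, fun j x hx => hz j hx ▸ hw2 j x hx⟩

theorem sub {w' w1' w2' : Fin m → ℝ → ℝ} (h : IsNetworkSolution n m eI eT κ α z w w1 w2)
    (h' : IsNetworkSolution n m eI eT κ α z w' w1' w2') :
    IsNetworkSolution n m eI eT κ α 0 (w' - w) (w1' - w1) (w2' - w2) := by
  obtain ⟨hw, hw1, hw2c, ⟨b, hb⟩, hK, hw2⟩ := h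
  obtain ⟨hw', hw1', hw2c', ⟨b', hb'⟩, hK', hw2'⟩ := h'
  refine ⟨fun j x hx => (hw' j x hx).sub (hw j x hx), fun j x hx => (hw1' j x hx).sub (hw1 j x hx),
    fun j => (hw2c' j).sub (hw2c j), ⟨b' - b, fun j => ?_⟩, fun v => ?_, fun j x hx => ?_⟩
  · simp only [Pi.sub_apply, (hb j).1, (hb j).2, (hb' j).1, (hb' j).2, and_self]
  · change kirchhoffDefect eI eT κ (w1' - w1) v = 0
    rw [map_sub, Pi.sub_apply, sub_eq_zero]
    exact (hK' v).trans (hK v).symm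
  · simp only [Pi.sub_apply, Pi.zero_apply]
    linarith [hw2 j x hx, hw2' j x hx]

theorem eqOn_zero (hκ : ∀ j, 0 < κ j) (hα : 0 < α)
    (h : IsNetworkSolution n m eI eT κ α 0 w w1 w2) (j : Fin m) : EqOn (w j) 0 (Icc 0 1) := by
  obtain ⟨hw, hw1, -, ⟨b, hb⟩, hK, hw2⟩ := h
  have hw1' : ∀ j, ∀ x ∈ Icc (0 : ℝ) 1, HasDerivWithinAt (w1 j) (α * w j x) (Icc 0 1) x :=
    fun j x hx => (hw1 j x hx).congr_deriv (by simpa using hw2 j x hx)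
  have hmono j := monotoneOn_mul_deriv (convex_Icc (0 : ℝ) 1) hα.le (hw j) (hw1' j)
  have hflux : ∑ j, κ j * (w j 1 * w1 j 1 - w j 0 * w1 j 0) = 0 := by
    simp only [(hb _).1, (hb _).2]
    rw [← sum_mul_kirchhoffDefect]
    exact sum_eq_zero fun v _ => by rw [show kirchhoffDefect eI eT κ w1 v = 0 from hK v, mul_zero]
  have hterm := (sum_eq_zero_iff_of_nonneg fun j _ => mul_nonneg (hκ j).le <| sub_nonneg.2 <|
    hmono j (left_mem_Icc.2 zero_le_one) (right_mem_Icc.2 zero_le_one) zero_le_one).1 hflux j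
    (mem_univ j)
  refine eqOn_zero_of_mul_deriv_eq zero_lt_one hα (hw j) (hw1' j) ?_
  linarith [(mul_eq_zero.1 hterm).resolve_left (hκ j).ne']

theorem eqOn (hκ : ∀ j, 0 < κ j) (hα : 0 < α) {w' w1' w2' : Fin m → ℝ → ℝ}
    (h : IsNetworkSolution n m eI eT κ α z w w1 w2)
    (h' : IsNetworkSolution n m eI eT κ α z w' w1' w2') (j : Fin m) :
    EqOn (w' j) (w j) (Icc 0 1) := fun _ hx =>
  sub_eq_zero.1 ((h.sub h').eqOn_zero hκ hα j hx)

end IsNetworkSolution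

section Existence

variable {n m : ℕ} (eI eT : Fin m → Fin n) (κ : Fin m → ℝ)

theorem isNetworkSolution_of_hasDerivAt {α : ℝ} {z w w1 : Fin m → ℝ → ℝ}
    (hz : ∀ j, Continuous (z j)) (hw : ∀ j x, HasDerivAt (w j) (w1 j x) x)
    (hw1 : ∀ j x, HasDerivAt (w1 j) (α * w j x - z j x) x) {b : Fin n → ℝ}
    (hb : ∀ j, w j 0 = b (eI j) ∧ w j 1 = b (eT j)) (hK : kirchhoffDefect eI eT κ w1 = 0) :
    IsNetworkSolution n m eI eT κ α z w w1 (fun j x => α * w j x - z j x) := by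
  have hwc j : Continuous (w j) := continuous_iff_continuousAt.2 fun x => (hw j x).continuousAt
  exact ⟨fun j x _ => (hw j x).hasDerivWithinAt, fun j x _ => (hw1 j x).hasDerivWithinAt,
    fun j => ((continuous_const.mul (hwc j)).sub (hz j)).continuousOn, ⟨b, hb⟩,
    fun v => congrFun hK v, fun j x _ => by ring⟩

noncomputable def sinhInterpDerivOnEdges (β : ℝ) : (Fin n → ℝ) →ₗ[ℝ] Fin m → ℝ → ℝ where
  toFun b j := sinhInterpDeriv β (b (eI j)) (b (eT j))
  map_add' b c := by
    ext j x
    exact sinhInterpDeriv_add ..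
  map_smul' r b := by
    ext j x
    exact sinhInterpDeriv_mul ..

/-- The Dirichlet-to-Neumann map of `y'' = β² y`, plus the identity at isolated vertices (where
the Kirchhoff defect vanishes identically) to make it injective. -/
noncomputable def dirichletToNeumann (β : ℝ) : (Fin n → ℝ) →ₗ[ℝ] Fin n → ℝ :=
  kirchhoffDefect eI eT κ ∘ₗ sinhInterpDerivOnEdges eI eT β
    + LinearMap.mulLeft ℝ fun v => if ∃ j, eI j = v ∨ eT j = v then 0 else 1

variable {κ}

theorem dirichletToNeumann_injective (hκ : ∀ j, 0 < κ j) {β : ℝ} (hβ : 0 < β) :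
    Function.Injective (dirichletToNeumann eI eT κ β) := by
  rw [← LinearMap.ker_eq_bot, LinearMap.ker_eq_bot']
  intro b hb
  have hK : kirchhoffDefect eI eT κ (sinhInterpDerivOnEdges eI eT β b) = 0 := by
    ext v
    by_cases hv : ∃ j, eI j = v ∨ eT j = v
    · simpa [dirichletToNeumann, hv] using congrFun hb v
    · exact kirchhoffDefect_of_isolated eI eT κ hv _
  have hsh : sinh β ≠ 0 := (sinh_pos_iff.2 hβ).ne'
  have hsol := isNetworkSolution_of_hasDerivAt eI eT κ (α := β ^ 2) (z := 0)
    (w := fun j => sinhInterp β (b (eI j)) (b (eT j))) (fun _ => continuous_const)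
    (fun j x => hasDerivAt_sinhInterp ..) (fun j x => by simpa using hasDerivAt_sinhInterpDeriv ..)
    (fun j => ⟨sinhInterp_zero hsh .., sinhInterp_one hsh ..⟩) hK
  have hedge j : b (eI j) = 0 ∧ b (eT j) = 0 := by
    have hzero := hsol.eqOn_zero hκ (by positivity) j
    exact ⟨by simpa [sinhInterp_zero hsh] using hzero (left_mem_Icc.2 zero_le_one),
      by simpa [sinhInterp_one hsh] using hzero (right_mem_Icc.2 zero_le_one)⟩
  ext v
  by_cases hv : ∃ j, eI j = v ∨ eT j = v
  · obtain ⟨j, rfl | rfl⟩ := hv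
    exacts [(hedge j).1, (hedge j).2]
  · simpa [dirichletToNeumann, kirchhoffDefect_of_isolated eI eT κ hv, hv] using congrFun hb v

theorem exists_kirchhoffDefect_sinhInterpDeriv_add_eq_zero (hκ : ∀ j, 0 < κ j) {β : ℝ}
    (hβ : 0 < β) (d : Fin m → ℝ → ℝ) :
    ∃ b : Fin n → ℝ, kirchhoffDefect eI eT κ (sinhInterpDerivOnEdges eI eT β b + d) = 0 := by
  obtain ⟨b, hb⟩ := LinearMap.injective_iff_surjective.1 (dirichletToNeumann_injective eI eT hκ hβ)
    (-kirchhoffDefect eI eT κ d)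
  refine ⟨b, funext fun v => ?_⟩
  by_cases hv : ∃ j, eI j = v ∨ eT j = v
  · have hbv := congrFun hb v
    simp only [dirichletToNeumann, hv, LinearMap.add_apply, LinearMap.comp_apply,
      LinearMap.mulLeft_apply, Pi.add_apply, Pi.mul_apply, Pi.neg_apply, if_true, zero_mul,
      add_zero] at hbv
    simp only [map_add, Pi.add_apply, hbv, neg_add_cancel, Pi.zero_apply]
  · exact kirchhoffDefect_of_isolated eI eT κ hv _

theorem exists_isNetworkSolution (hκ : ∀ j, 0 < κ j) {α : ℝ} (hα : 0 < α) {z : Fin m → ℝ → ℝ}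
    (hz : ∀ j, Continuous (z j)) : ∃ w w1 w2, IsNetworkSolution n m eI eT κ α z w w1 w2 := by
  set β := √α
  have hβ : 0 < β := sqrt_pos.2 hα
  have hβα : β ^ 2 = α := sq_sqrt hα.le
  have hsh : sinh β ≠ 0 := (sinh_pos_iff.2 hβ).ne'
  -- `p j` solves the edge equation and vanishes at both ends
  set p : Fin m → ℝ → ℝ := fun j x => sinhInterp β 0 (-duhamel β (z j) 1) x + duhamel β (z j) x
  set p1 : Fin m → ℝ → ℝ :=
    fun j x => sinhInterpDeriv β 0 (-duhamel β (z j) 1) x + duhamelDeriv β (z j) x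
  obtain ⟨b, hb⟩ := exists_kirchhoffDefect_sinhInterpDeriv_add_eq_zero eI eT hκ hβ p1
  refine ⟨_, _, _, isNetworkSolution_of_hasDerivAt eI eT κ (α := α) (w := fun j x =>
    sinhInterp β (b (eI j)) (b (eT j)) x + p j x) hz (fun j x => ?_) (fun j x => ?_) (b := b)
    (fun j => ?_) hb⟩
  · exact (hasDerivAt_sinhInterp ..).add ((hasDerivAt_sinhInterp ..).add
      (hasDerivAt_duhamel hβ.ne' (hz j) x))
  · refine ((hasDerivAt_sinhInterpDeriv ..).add ((hasDerivAt_sinhInterpDeriv ..).add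
      (hasDerivAt_duhamelDeriv hβ.ne' (hz j) x))).congr_deriv ?_
    rw [← hβα]
    ring
  · simp [p, sinhInterp_zero hsh, sinhInterp_one hsh, duhamel_zero]

end Existence

theorem stmt_16_general (n m : ℕ) (eI eT : Fin m → Fin n)
    (κ : Fin m → ℝ) (hκ : ∀ j, 0 < κ j) (α : ℝ) (hα : 0 < α)
    (z : Fin m → ℝ → ℝ)
    (hzcont : ∀ j, ContinuousOn (z j) (Set.Icc 0 1)) :
    ∃ w w1 w2 : Fin m → ℝ → ℝ,
      IsNetworkSolution n m eI eT κ α z w w1 w2 ∧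
      ∀ w' w1' w2' : Fin m → ℝ → ℝ,
        IsNetworkSolution n m eI eT κ α z w' w1' w2' →
        ∀ j, ∀ x ∈ Set.Icc (0:ℝ) 1, w' j x = w j x := by
  choose zc hzc hzcz using fun j => (hzcont j).exists_continuous_eqOn_Icc zero_le_one
  obtain ⟨w, w1, w2, hsol⟩ := exists_isNetworkSolution eI eT hκ hα hzc
  have hsol' := hsol.congr_source hzcz
  exact ⟨w, w1, w2, hsol', fun _ _ _ h' j _ hx => hsol'.eqOn hκ hα h' j hx⟩

/-- **Existence and uniqueness for the elliptic problem on a network.**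
Let `α > 0` and let `z` be a function on a finite weighted network, continuous on each
edge and continuous at the vertices. Then there is exactly one function `w` on the
network, twice continuously differentiable on each edge, continuous at the vertices,
satisfying the Kirchhoff condition at every vertex and `−w_j'' = z_j − α w_j` on every
edge. -/
theorem stmt_16 (n m : ℕ) (hm : 1 ≤ m) (eI eT : Fin m → Fin n) (hIT : ∀ j, eI j ≠ eT j)
    (κ : Fin m → ℝ) (hκ : ∀ j, 0 < κ j) (α : ℝ) (hα : 0 < α)
    (z : Fin m → ℝ → ℝ)
    (hzcont : ∀ j, ContinuousOn (z j) (Set.Icc 0 1))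
    (bz : Fin n → ℝ) (hzb : ∀ j, z j 0 = bz (eI j) ∧ z j 1 = bz (eT j)) :
    ∃ w w1 w2 : Fin m → ℝ → ℝ,
      IsNetworkSolution n m eI eT κ α z w w1 w2 ∧
      ∀ w' w1' w2' : Fin m → ℝ → ℝ,
        IsNetworkSolution n m eI eT κ α z w' w1' w2' →
        ∀ j, ∀ x ∈ Set.Icc (0:ℝ) 1, w' j x = w j x :=
  stmt_16_general n m eI eT κ hκ α hα z hzcont
end
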